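/- arXiv:2603.27655 — 8 statements merged into one kernel-verified Lean document; each statement's English description precedes it below -/
import Mathlib

section
/- Let G = (V,E) be an edge-minimal non-cactus connected graph, i.e., G is connected, G is not a cactus, and for every edge e of G, the graph G - e is a cactus. If C1 and C2 are two distinct cycles in G that share at least one edge, then every edge of G belongs to E(C1) ∪ E(C2). -/
open SimpleGraph

/-- A cactus is a connected graph in which every edge belongs to at most one simple
cycle: any two simple cycles sharing an edge have the same edge set. -/
def SimpleGraph.IsCactus {V : Type*} (G : SimpleGraph V) : Prop :=
  G.Connected ∧ ∀ ⦃u v : V⦄ (c₁ : G.Walk u u) (c₂ : G.Walk v v),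
    c₁.IsCycle → c₂.IsCycle → ∀ e, e ∈ c₁.edges → e ∈ c₂.edges →
      {f | f ∈ c₁.edges} = {f | f ∈ c₂.edges}

theorem edge_minimal_cycles_cover {V : Type*} (G : SimpleGraph V)
    (hconn : G.Connected) (hnc : ¬G.IsCactus)
    (hmin : ∀ e ∈ G.edgeSet, (G.deleteEdges {e}).IsCactus)
    {u v : V} (c₁ : G.Walk u u) (c₂ : G.Walk v v)
    (h₁ : c₁.IsCycle) (h₂ : c₂.IsCycle)
    (hne : {f | f ∈ c₁.edges} ≠ {f | f ∈ c₂.edges})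
    (hshare : ∃ e, e ∈ c₁.edges ∧ e ∈ c₂.edges) :
    ∀ e ∈ G.edgeSet, e ∈ c₁.edges ∨ e ∈ c₂.edges := by
  intro e he
  by_contra h
  push_neg at h
  obtain ⟨h1, h2⟩ := h
  have hsub₁ : ∀ f ∈ c₁.edges, f ∈ (G.deleteEdges {e}).edgeSet := by
    intro f hf
    rw [SimpleGraph.edgeSet_deleteEdges]
    exact ⟨c₁.edges_subset_edgeSet hf, by rintro rfl; exact h1 hf⟩
  have hsub₂ : ∀ f ∈ c₂.edges, f ∈ (G.deleteEdges {e}).edgeSet := by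
    intro f hf
    rw [SimpleGraph.edgeSet_deleteEdges]
    exact ⟨c₂.edges_subset_edgeSet hf, by rintro rfl; exact h2 hf⟩
  obtain ⟨f, hf1, hf2⟩ := hshare
  have hcac := hmin e he
  have := hcac.2 (c₁.transfer _ hsub₁) (c₂.transfer _ hsub₂)
    (h₁.transfer hsub₁) (h₂.transfer hsub₂) f
    (by rwa [c₁.edges_transfer]) (by rwa [c₂.edges_transfer])
  rw [c₁.edges_transfer, c₂.edges_transfer] at this
  exact hne this
end

section
/- Let G be an edge-minimal non-cactus connected graph, and let C1 and C2 be two distinct cycles in G sharing at least one edge. Then every cycle C of G satisfies E(C) ∩ E(C1) ≠ ∅. -/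
open SimpleGraph

section Aux

variable {V : Type*} {G : SimpleGraph V}

/-- In a path, the only edge incident to the start vertex is the first edge. -/
lemma path_start_edge {x y z : V} {p : G.Walk x y} (hp : p.IsPath)
    (hz : s(x, z) ∈ p.edges) : z = p.getVert 1 := by
  cases p with
  | nil => simp at hz
  | cons h q =>
    rename_i b
    rw [SimpleGraph.Walk.edges_cons, List.mem_cons] at hz
    rcases hz with hz | hz
    · rw [Sym2.eq_iff] at hz
      rcases hz with ⟨-, rfl⟩ | ⟨rfl, rfl⟩
      · simp [SimpleGraph.Walk.getVert_cons_succ]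
      · exact absurd rfl h.ne
    · exact absurd (SimpleGraph.Walk.fst_mem_support_of_mem_edges q hz)
        ((SimpleGraph.Walk.cons_isPath_iff h q).mp hp).2

/-- A cycle has exactly two "neighbors" at its starting vertex. -/
lemma cycle_start_two_neighbors {x : V} {c : G.Walk x x} (hc : c.IsCycle) :
    ∃ a b : V, a ≠ b ∧ s(x, a) ∈ c.edges ∧ s(x, b) ∈ c.edges ∧
      ∀ z, s(x, z) ∈ c.edges → z = a ∨ z = b := by
  cases c with
  | nil => exact absurd hc (SimpleGraph.Walk.IsCycle.not_of_nil)
  | cons h q =>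
    rename_i b
    obtain ⟨hq, hxb⟩ := (SimpleGraph.Walk.cons_isCycle_iff q h).mp hc
    -- second neighbor: second vertex of q.reverse
    have hqrev : q.reverse.IsPath := hq.reverse
    have hq_not_nil : ¬ q.Nil := by
      intro hnil
      have := hnil.eq
      exact h.ne (by simpa using this.symm)
    have hrev_not_nil : ¬ q.reverse.Nil := by
      intro hn
      apply hq_not_nil
      rw [SimpleGraph.Walk.nil_iff_length_eq] at hn ⊢
      rwa [SimpleGraph.Walk.length_reverse] at hn
    have hedge' : s(x, q.reverse.getVert 1) ∈ q.reverse.edges := by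
      have hmem : s(x, q.reverse.getVert 1) ∈
          (SimpleGraph.Walk.cons (q.reverse.adj_snd hrev_not_nil)
            q.reverse.tail).edges := by simp
      rwa [SimpleGraph.Walk.cons_tail_eq _ hrev_not_nil] at hmem
    have hedgeq : s(x, q.reverse.getVert 1) ∈ q.edges := by
      rwa [SimpleGraph.Walk.edges_reverse, List.mem_reverse] at hedge'
    refine ⟨b, q.reverse.getVert 1, ?_, by simp, by simp only [Walk.edges_cons, List.mem_cons]; exact Or.inr hedgeq, ?_⟩
    · intro hbe
      exact hxb ((congrArg (fun t => s(x, t)) hbe).symm ▸ hedgeq)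
    · intro z hz
      rw [SimpleGraph.Walk.edges_cons, List.mem_cons] at hz
      rcases hz with hz | hz
      · rw [Sym2.eq_iff] at hz
        rcases hz with ⟨-, rfl⟩ | ⟨rfl, rfl⟩
        · exact Or.inl rfl
        · exact absurd rfl h.ne
      · right
        have : s(x, z) ∈ q.reverse.edges := by
          rwa [SimpleGraph.Walk.edges_reverse, List.mem_reverse]
        exact path_start_edge hqrev this

/-- If `x` lies on cycle `c₁`, whose edges are all edges of cycle `c₂`, then any
edge of `c₂` incident to `x` is an edge of `c₁`. -/
lemma edge_at_support_mem {x y u v : V} {c₁ : G.Walk u u} {c₂ : G.Walk v v}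
    (h₁ : c₁.IsCycle) (h₂ : c₂.IsCycle) (hsub : ∀ e ∈ c₁.edges, e ∈ c₂.edges)
    (hx : x ∈ c₁.support) (hxy : s(x, y) ∈ c₂.edges) : s(x, y) ∈ c₁.edges := by
  classical
  obtain ⟨a, b, hab, ha, hb, -⟩ := cycle_start_two_neighbors (h₁.rotate hx)
  have hrot := SimpleGraph.Walk.rotate_edges c₁ _ hx
  have ha₁ : s(x, a) ∈ c₁.edges := hrot.mem_iff.mp ha
  have hb₁ : s(x, b) ∈ c₁.edges := hrot.mem_iff.mp hb
  have hx₂ : x ∈ c₂.support :=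
    SimpleGraph.Walk.fst_mem_support_of_mem_edges c₂ (hsub _ ha₁)
  obtain ⟨a₂, b₂, hab₂, -, -, huniq⟩ := cycle_start_two_neighbors (h₂.rotate hx₂)
  have hrot₂ := SimpleGraph.Walk.rotate_edges c₂ _ hx₂
  have hA := huniq a (hrot₂.mem_iff.mpr (hsub _ ha₁))
  have hB := huniq b (hrot₂.mem_iff.mpr (hsub _ hb₁))
  have hY := huniq y (hrot₂.mem_iff.mpr hxy)
  have hy : y = a ∨ y = b := by
    rcases hY with hY | hY
    · rcases hA with hA | hA
      · exact Or.inl (hY.trans hA.symm)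
      · rcases hB with hB | hB
        · exact Or.inr (hY.trans hB.symm)
        · exact absurd (hA.trans hB.symm) hab
    · rcases hA with hA | hA
      · rcases hB with hB | hB
        · exact absurd (hA.trans hB.symm) hab
        · exact Or.inr (hY.trans hB.symm)
      · exact Or.inl (hY.trans hA.symm)
  rcases hy with rfl | rfl
  · exact ha₁
  · exact hb₁

/-- Walking along edges of `c₂` starting from a vertex of `c₁`, all edges stay in `c₁`. -/
lemma traverse_aux {u v : V} {c₁ : G.Walk u u} {c₂ : G.Walk v v}
    (h₁ : c₁.IsCycle) (h₂ : c₂.IsCycle) (hsub : ∀ e ∈ c₁.edges, e ∈ c₂.edges) :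
    ∀ {x y : V} (p : G.Walk x y), (∀ e ∈ p.edges, e ∈ c₂.edges) →
      x ∈ c₁.support → ∀ e ∈ p.edges, e ∈ c₁.edges := by
  intro x y p
  induction p with
  | nil => intro _ _ e he; simp at he
  | @cons a b c hadj q ih =>
    intro hp hx e he
    have hfirst : s(a, b) ∈ c₁.edges :=
      edge_at_support_mem h₁ h₂ hsub hx (hp _ (by simp))
    rw [SimpleGraph.Walk.edges_cons, List.mem_cons] at he
    rcases he with rfl | he
    · exact hfirst
    · exact ih (fun f hf => hp f (by simp [hf]))
        (SimpleGraph.Walk.snd_mem_support_of_mem_edges c₁ hfirst) e he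

/-- A cycle whose edges are contained in another cycle's edges has the same edges. -/
lemma subcycle_eq {u v : V} {c₁ : G.Walk u u} {c₂ : G.Walk v v}
    (h₁ : c₁.IsCycle) (h₂ : c₂.IsCycle) (hsub : ∀ e ∈ c₁.edges, e ∈ c₂.edges) :
    ∀ e ∈ c₂.edges, e ∈ c₁.edges := by
  classical
  -- pick a vertex of c₁ that lies on c₂
  obtain ⟨a, b, -, ha, -, -⟩ := cycle_start_two_neighbors h₁
  have ha' : s(u, a) ∈ c₂.edges := hsub _ ha
  have hu₂ : u ∈ c₂.support := SimpleGraph.Walk.fst_mem_support_of_mem_edges c₂ ha'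
  have hrot := SimpleGraph.Walk.rotate_edges c₂ _ hu₂
  intro e he
  have he' : e ∈ (c₂.rotate _ hu₂).edges := hrot.mem_iff.mpr he
  exact traverse_aux h₁ h₂ hsub (c₂.rotate _ hu₂)
    (fun f hf => hrot.mem_iff.mp hf) (SimpleGraph.Walk.start_mem_support c₁) e he'

lemma edges_toDeleteEdges' (s : Set (Sym2 V)) {x y : V} (p : G.Walk x y)
    (hp : ∀ e ∈ p.edges, e ∉ s) : (p.toDeleteEdges s hp).edges = p.edges :=
  SimpleGraph.Walk.edges_transfer _ _

end Aux

theorem every_cycle_meets_c1 {V : Type*} (G : SimpleGraph V)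
    (hconn : G.Connected) (hnc : ¬G.IsCactus)
    (hmin : ∀ e ∈ G.edgeSet, (G.deleteEdges {e}).IsCactus)
    {u v : V} (c₁ : G.Walk u u) (c₂ : G.Walk v v)
    (h₁ : c₁.IsCycle) (h₂ : c₂.IsCycle)
    (hne : {f | f ∈ c₁.edges} ≠ {f | f ∈ c₂.edges})
    (hshare : ∃ e, e ∈ c₁.edges ∧ e ∈ c₂.edges) :
    ∀ ⦃w : V⦄ (c : G.Walk w w), c.IsCycle → ∃ e, e ∈ c.edges ∧ e ∈ c₁.edges := by
  classical
  obtain ⟨e₀, he₀₁, he₀₂⟩ := hshare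
  -- Step 1: every edge of G is in c₁ or c₂
  have step1 : ∀ e ∈ G.edgeSet, e ∈ c₁.edges ∨ e ∈ c₂.edges := by
    intro e heG
    by_contra hcon
    push_neg at hcon
    obtain ⟨he1, he2⟩ := hcon
    obtain ⟨-, hcac⟩ := hmin e heG
    have hp1 : ∀ f ∈ c₁.edges, f ∉ ({e} : Set (Sym2 V)) := by
      intro f hf hfe; exact he1 (by simpa using hfe ▸ hf)
    have hp2 : ∀ f ∈ c₂.edges, f ∉ ({e} : Set (Sym2 V)) := by
      intro f hf hfe; exact he2 (by simpa using hfe ▸ hf)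
    have hd1 := SimpleGraph.Walk.IsCycle.toDeleteEdges G ({e} : Set (Sym2 V)) h₁ hp1
    have hd2 := SimpleGraph.Walk.IsCycle.toDeleteEdges G ({e} : Set (Sym2 V)) h₂ hp2
    have heq := hcac (c₁.toDeleteEdges {e} hp1) (c₂.toDeleteEdges {e} hp2) hd1 hd2 e₀
      (by rwa [edges_toDeleteEdges'])
      (by rwa [edges_toDeleteEdges'])
    apply hne
    rwa [edges_toDeleteEdges', edges_toDeleteEdges'] at heq
  intro w c hc
  by_contra hcon
  push_neg at hcon
  -- every edge of c is in c₂
  have hcc2 : ∀ e ∈ c.edges, e ∈ c₂.edges := by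
    intro e he
    rcases step1 e (c.edges_subset_edgeSet he) with h | h
    · exact absurd h (hcon e he)
    · exact h
  -- c has at least one edge, shared with c₂
  obtain ⟨a, b, -, ha, -, -⟩ := cycle_start_two_neighbors hc
  have hfc2 : s(w, a) ∈ c₂.edges := hcc2 _ ha
  -- Case split: is there an edge of c₁ not in c₂?
  by_cases hcase : ∀ e ∈ c₁.edges, e ∈ c₂.edges
  · -- c₁'s edges contained in c₂'s, so equal by the subcycle lemma: contradiction
    apply hne
    ext f
    exact ⟨fun hf => hcase f hf, fun hf => subcycle_eq h₁ h₂ hcase f hf⟩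
  · push_neg at hcase
    obtain ⟨g, hg₁, hg₂⟩ := hcase
    have hgG : g ∈ G.edgeSet := c₁.edges_subset_edgeSet hg₁
    obtain ⟨-, hcac⟩ := hmin g hgG
    have hpc : ∀ f ∈ c.edges, f ∉ ({g} : Set (Sym2 V)) := by
      intro f hf hfe
      rw [Set.mem_singleton_iff] at hfe
      exact hcon f hf (hfe ▸ hg₁)
    have hp2 : ∀ f ∈ c₂.edges, f ∉ ({g} : Set (Sym2 V)) := by
      intro f hf hfe
      rw [Set.mem_singleton_iff] at hfe
      exact hg₂ (hfe ▸ hf)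
    have hdc := SimpleGraph.Walk.IsCycle.toDeleteEdges G ({g} : Set (Sym2 V)) hc hpc
    have hd2 := SimpleGraph.Walk.IsCycle.toDeleteEdges G ({g} : Set (Sym2 V)) h₂ hp2
    have heq := hcac (c.toDeleteEdges {g} hpc) (c₂.toDeleteEdges {g} hp2) hdc hd2 (s(w, a))
      (by rw [edges_toDeleteEdges']; exact ha)
      (by rw [edges_toDeleteEdges']; exact hfc2)
    rw [edges_toDeleteEdges', edges_toDeleteEdges'] at heq
    -- now c and c₂ have the same edges, so e₀ ∈ c₁ ∩ c₂ lies in c: contradiction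
    have : e₀ ∈ c.edges := by
      have : e₀ ∈ {f | f ∈ c₂.edges} := he₀₂
      rwa [← heq] at this
    exact hcon e₀ this he₀₁
end

section
/- Let G be an edge-minimal non-cactus connected graph, let C1 and C2 be two distinct cycles in G with E(C1) ∩ E(C2) ≠ ∅, and let C3 be a cycle of G distinct from both C1 and C2. Then the symmetric difference E(C1) Δ E(C2) is contained in E(C3). -/
open SimpleGraph

namespace CactusAux

variable {V : Type*} {G : SimpleGraph V}

lemma mem_support_of_edge {a b : V} {p : G.Walk a b} {e : Sym2 V} (he : e ∈ p.edges)
    {x : V} (hx : x ∈ e) : x ∈ p.support := by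
  induction e using Sym2.ind with
  | _ y z =>
    rcases Sym2.mem_iff.mp hx with rfl | rfl
    · exact p.fst_mem_support_of_mem_edges he
    · exact p.snd_mem_support_of_mem_edges he

lemma dart_snd_mem_edge (d : G.Dart) : d.snd ∈ d.edge := by
  rcases d with ⟨⟨x, y⟩, h⟩
  exact Sym2.mem_mk_right x y

/-- At the base point of a cycle there are two distinct incident edges. -/
lemma two_edges_at {a : V} (c : G.Walk a a) (hc : c.IsCycle) :
    ∃ e₁ e₂ : Sym2 V, e₁ ≠ e₂ ∧ e₁ ∈ c.edges ∧ e₂ ∈ c.edges ∧ a ∈ e₁ ∧ a ∈ e₂ := by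
  cases c with
  | nil => exact absurd rfl hc.ne_nil
  | @cons _ w _ h t =>
    have ht3 := hc.three_le_length
    have htne : t.darts ≠ [] := by
      intro hnil
      have := t.length_darts
      rw [hnil] at this
      simp only [Walk.length_cons] at ht3
      simp at this
      omega
    have htrail := hc.isTrail
    rw [Walk.isTrail_cons] at htrail
    have hlast : (t.darts.getLast htne).snd = a := by rw [Walk.getLast_darts_eq_lastDart]; rfl
    have he₂t : (t.darts.getLast htne).edge ∈ t.edges := by
      have hdef : t.edges = t.darts.map Dart.edge := rfl
      rw [hdef]
      exact List.mem_map_of_mem (f := Dart.edge) (List.getLast_mem htne)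
    refine ⟨s(a, w), (t.darts.getLast htne).edge, ?_, ?_, ?_, ?_, ?_⟩
    · intro heq
      exact htrail.2 (heq ▸ he₂t)
    · exact List.mem_cons_self
    · exact List.mem_cons_of_mem _ he₂t
    · exact Sym2.mem_mk_left a w
    · have := dart_snd_mem_edge (t.darts.getLast htne)
      rwa [hlast] at this

/-- No cycle lies (edge-wise) inside a path. -/
lemma no_cycle_in_path {v : V} (d : G.Walk v v) (hd : d.IsCycle) :
    ∀ {a b : V} (p : G.Walk a b), p.IsPath → (∀ e ∈ d.edges, e ∈ p.edges) → False := by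
  classical
  intro a b p
  induction p with
  | nil =>
    intro _ hsub
    cases d with
    | nil => exact absurd rfl hd.ne_nil
    | cons h t => simpa using hsub _ (List.mem_cons_self)
  | @cons a a' b h q ih =>
    intro hp hsub
    rw [Walk.cons_isPath_iff] at hp
    by_cases hmem : s(a, a') ∈ d.edges
    · have ha : a ∈ d.support := d.fst_mem_support_of_mem_edges hmem
      obtain ⟨e₁, e₂, hnee, he₁, he₂, ha₁, ha₂⟩ := two_edges_at (d.rotate a ha) (hd.rotate ha)
      have hmemrot : ∀ e, e ∈ (d.rotate a ha).edges → e ∈ d.edges :=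
        fun e he => (d.rotate_edges a ha).mem_iff.mp he
      have key : ∀ e, e ∈ d.edges → a ∈ e → e = s(a, a') := by
        intro e he hae
        have := hsub e he
        rw [Walk.edges_cons, List.mem_cons] at this
        rcases this with h' | h'
        · exact h'
        · exact absurd (mem_support_of_edge h' hae) hp.2
      exact hnee (by rw [key e₁ (hmemrot _ he₁) ha₁, key e₂ (hmemrot _ he₂) ha₂])
    · refine ih hp.1 (fun e he => ?_)
      have := hsub e he
      rw [Walk.edges_cons, List.mem_cons] at this
      rcases this with rfl | h'
      · exact absurd he hmem
      · exact h'

/-- An edge of a path incident to the start vertex must be the first edge. -/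
lemma path_start_edge : ∀ {x s : V} (p : G.Walk x s), p.IsPath → ∀ {y : V}, s(x, y) ∈ p.edges →
    ∃ (h : G.Adj x y) (q : G.Walk y s), p = Walk.cons h q := by
  intro x s p hp y he
  cases p with
  | nil => simp at he
  | @cons _ w _ h q =>
    rw [Walk.cons_isPath_iff] at hp
    rw [Walk.edges_cons, List.mem_cons] at he
    rcases he with he | he
    · have hyw : y = w := by
        rw [Sym2.eq_iff] at he
        rcases he with ⟨-, rfl⟩ | ⟨h1, -⟩
        · rfl
        · exact absurd h1 h.ne
      subst hyw
      exact ⟨h, q, rfl⟩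
    · exact absurd (mem_support_of_edge he (Sym2.mem_mk_left x y)) hp.2

lemma cycle_not_in_cycle_minus : ∀ {x : V} (c : G.Walk x x), c.IsCycle →
    ∀ {v : V} (d : G.Walk v v), d.IsCycle → (∀ g ∈ d.edges, g ∈ c.edges) →
    ∀ {y : V}, s(x, y) ∈ c.edges → s(x, y) ∉ d.edges → False := by
  intro x c hc v d hd hsub y hf hfd
  cases c with
  | nil => exact absurd rfl hc.ne_nil
  | @cons _ w _ h t =>
    rw [Walk.cons_isCycle_iff] at hc
    rw [Walk.edges_cons, List.mem_cons] at hf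
    rcases hf with hf | hf
    · -- s(x,y) is the first edge; d lives inside the path t
      refine no_cycle_in_path d hd t hc.1 (fun g hg => ?_)
      have := hsub g hg
      rw [Walk.edges_cons, List.mem_cons] at this
      rcases this with rfl | h'
      · exact absurd hg (hf ▸ hfd)
      · exact h'
    · -- s(x,y) lies in t, hence it is the first edge of t.reverse
      have htr : t.reverse.IsPath := hc.1.reverse
      have hfr : s(x, y) ∈ t.reverse.edges := by
        rw [Walk.edges_reverse, List.mem_reverse]; exact hf
      obtain ⟨h₂, t₂, ht₂eq⟩ := path_start_edge t.reverse htr hfr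
      have ht₂ : t₂.IsPath ∧ x ∉ t₂.support := by
        have := htr
        rw [ht₂eq, Walk.cons_isPath_iff] at this
        exact this
      have hP : (Walk.cons h t₂.reverse).IsPath := by
        rw [Walk.cons_isPath_iff]
        exact ⟨ht₂.1.reverse, by rw [Walk.support_reverse, List.mem_reverse]; exact ht₂.2⟩
      refine no_cycle_in_path d hd _ hP (fun g hg => ?_)
      have hgc := hsub g hg
      rw [Walk.edges_cons, List.mem_cons] at hgc
      rw [Walk.edges_cons, List.mem_cons]
      rcases hgc with rfl | hgt
      · exact Or.inl rfl
      · right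
        have hgr : g ∈ t.reverse.edges := by
          rw [Walk.edges_reverse, List.mem_reverse]; exact hgt
        rw [ht₂eq, Walk.edges_cons, List.mem_cons] at hgr
        rcases hgr with rfl | h'
        · exact absurd hg hfd
        · rw [Walk.edges_reverse, List.mem_reverse]; exact h'

/-- If the edges of a cycle `d` are contained in those of a cycle `c`, the containment
is an equality. -/
lemma cycle_subset_cycle_eq {u v : V} (c : G.Walk u u) (d : G.Walk v v)
    (hc : c.IsCycle) (hd : d.IsCycle) (hsub : ∀ g ∈ d.edges, g ∈ c.edges)
    {f : Sym2 V} (hf : f ∈ c.edges) : f ∈ d.edges := by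
  classical
  by_contra hfd
  revert hf hfd
  induction f using Sym2.ind with
  | _ x y =>
    intro hf hfd
    have hx : x ∈ c.support := c.fst_mem_support_of_mem_edges hf
    have hmem : ∀ g, g ∈ (c.rotate x hx).edges ↔ g ∈ c.edges :=
      fun g => (c.rotate_edges x hx).mem_iff
    exact cycle_not_in_cycle_minus (c.rotate x hx) (hc.rotate hx) d hd
      (fun g hg => (hmem g).mpr (hsub g hg)) ((hmem _).mpr hf) hfd

/-- Every edge of an edge-minimal non-cactus lies on one of two given distinct
edge-sharing cycles. -/
lemma growth {G : SimpleGraph V} (hmin : ∀ e ∈ G.edgeSet, (G.deleteEdges {e}).IsCactus)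
    {a b : V} (p : G.Walk a a) (q : G.Walk b b) (hp : p.IsCycle) (hq : q.IsCycle)
    (hsh : ∃ e, e ∈ p.edges ∧ e ∈ q.edges)
    (hne : {f | f ∈ p.edges} ≠ {f | f ∈ q.edges}) :
    ∀ g ∈ G.edgeSet, g ∈ p.edges ∨ g ∈ q.edges := by
  intro g hg
  by_contra hcon
  push_neg at hcon
  obtain ⟨hp', hq'⟩ := hcon
  obtain ⟨-, hcond⟩ := hmin g hg
  have hpd : ∀ e ∈ p.edges, e ∉ ({g} : Set (Sym2 V)) :=
    fun e he hm => hp' (Set.mem_singleton_iff.mp hm ▸ he)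
  have hqd : ∀ e ∈ q.edges, e ∉ ({g} : Set (Sym2 V)) :=
    fun e he hm => hq' (Set.mem_singleton_iff.mp hm ▸ he)
  obtain ⟨e₀, he₀p, he₀q⟩ := hsh
  have := hcond (p.toDeleteEdges {g} hpd) (q.toDeleteEdges {g} hqd)
    (hp.toDeleteEdges _ _ hpd) (hq.toDeleteEdges _ _ hqd) e₀
    (by simpa using he₀p) (by simpa using he₀q)
  simp only [Walk.edges_transfer] at this
  exact hne this

end CactusAux

open CactusAux in
theorem symmdiff_subset_third_cycle {V : Type*} (G : SimpleGraph V)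
    (hconn : G.Connected) (hnc : ¬G.IsCactus)
    (hmin : ∀ e ∈ G.edgeSet, (G.deleteEdges {e}).IsCactus)
    {u v w : V} (c₁ : G.Walk u u) (c₂ : G.Walk v v) (c₃ : G.Walk w w)
    (h₁ : c₁.IsCycle) (h₂ : c₂.IsCycle) (h₃ : c₃.IsCycle)
    (hne : {f | f ∈ c₁.edges} ≠ {f | f ∈ c₂.edges})
    (hshare : ∃ e, e ∈ c₁.edges ∧ e ∈ c₂.edges)
    (hne₁ : {f | f ∈ c₃.edges} ≠ {f | f ∈ c₁.edges})
    (hne₂ : {f | f ∈ c₃.edges} ≠ {f | f ∈ c₂.edges}) :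
    symmDiff {f | f ∈ c₁.edges} {f | f ∈ c₂.edges} ⊆ {f | f ∈ c₃.edges} := by
  classical
  intro f hf
  rw [Set.mem_symmDiff] at hf
  simp only [Set.mem_setOf_eq] at hf ⊢
  by_contra hf₃
  have grow12 := growth hmin c₁ c₂ h₁ h₂ hshare hne
  obtain ⟨g, hg3⟩ : ∃ g, g ∈ c₃.edges := by
    cases c₃ with
    | nil => exact absurd rfl h₃.ne_nil
    | cons h t => exact ⟨_, List.mem_cons_self⟩
  rcases hf with ⟨hf₁, hf₂⟩ | ⟨hf₂, hf₁⟩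
  · -- f ∈ c₁ \ c₂
    have hfE : f ∈ G.edgeSet := c₁.edges_subset_edgeSet hf₁
    obtain ⟨-, hcond⟩ := hmin f hfE
    have hd₂ : ∀ e ∈ c₂.edges, e ∉ ({f} : Set (Sym2 V)) :=
      fun e he hm => hf₂ (Set.mem_singleton_iff.mp hm ▸ he)
    have hd₃ : ∀ e ∈ c₃.edges, e ∉ ({f} : Set (Sym2 V)) :=
      fun e he hm => hf₃ (Set.mem_singleton_iff.mp hm ▸ he)
    have hdisj : ∀ e ∈ c₃.edges, e ∉ c₂.edges := by
      intro e he3 he2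
      have := hcond (c₃.toDeleteEdges {f} hd₃) (c₂.toDeleteEdges {f} hd₂)
        (h₃.toDeleteEdges _ _ hd₃) (h₂.toDeleteEdges _ _ hd₂) e
        (by simpa using he3) (by simpa using he2)
      simp only [Walk.edges_transfer] at this
      exact hne₂ this
    have hg1 : g ∈ c₁.edges := by
      rcases grow12 g (c₃.edges_subset_edgeSet hg3) with h' | h'
      · exact h'
      · exact absurd h' (hdisj g hg3)
    have grow13 := growth hmin c₁ c₃ h₁ h₃ ⟨g, hg1, hg3⟩ (Ne.symm hne₁)
    have hsub : ∀ e ∈ c₂.edges, e ∈ c₁.edges := by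
      intro e he
      rcases grow13 e (c₂.edges_subset_edgeSet he) with h' | h'
      · exact h'
      · exact absurd he (hdisj e h')
    exact hf₂ (cycle_subset_cycle_eq c₁ c₂ h₁ h₂ hsub hf₁)
  · -- f ∈ c₂ \ c₁
    have hfE : f ∈ G.edgeSet := c₂.edges_subset_edgeSet hf₂
    obtain ⟨-, hcond⟩ := hmin f hfE
    have hd₁ : ∀ e ∈ c₁.edges, e ∉ ({f} : Set (Sym2 V)) :=
      fun e he hm => hf₁ (Set.mem_singleton_iff.mp hm ▸ he)
    have hd₃ : ∀ e ∈ c₃.edges, e ∉ ({f} : Set (Sym2 V)) :=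
      fun e he hm => hf₃ (Set.mem_singleton_iff.mp hm ▸ he)
    have hdisj : ∀ e ∈ c₃.edges, e ∉ c₁.edges := by
      intro e he3 he1
      have := hcond (c₃.toDeleteEdges {f} hd₃) (c₁.toDeleteEdges {f} hd₁)
        (h₃.toDeleteEdges _ _ hd₃) (h₁.toDeleteEdges _ _ hd₁) e
        (by simpa using he3) (by simpa using he1)
      simp only [Walk.edges_transfer] at this
      exact hne₁ this
    have hg2 : g ∈ c₂.edges := by
      rcases grow12 g (c₃.edges_subset_edgeSet hg3) with h' | h'
      · exact absurd h' (hdisj g hg3)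
      · exact h'
    have grow23 := growth hmin c₂ c₃ h₂ h₃ ⟨g, hg2, hg3⟩ (Ne.symm hne₂)
    have hsub : ∀ e ∈ c₁.edges, e ∈ c₂.edges := by
      intro e he
      rcases grow23 e (c₁.edges_subset_edgeSet he) with h' | h'
      · exact h'
      · exact absurd he (hdisj e h')
    exact hf₁ (cycle_subset_cycle_eq c₂ c₁ h₂ h₁ hsub hf₂)
end

section
/- Let G be a connected graph such that there exist distinct vertices x and y and two distinct edge-disjoint paths P1 and P2, both from x to y, with E(G) = E(P1) ∪ E(P2). Then every edge of G lies in a simple cycle of G. -/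
open SimpleGraph

private lemma aux_split {V : Type*} {G : SimpleGraph V} {x y v w : V}
    (p : G.Walk x y) (hp : p.edges.Nodup) (h : s(v, w) ∈ p.edges) :
    ((G.deleteEdges {s(v,w)}).Reachable x v ∧ (G.deleteEdges {s(v,w)}).Reachable w y) ∨
    ((G.deleteEdges {s(v,w)}).Reachable x w ∧ (G.deleteEdges {s(v,w)}).Reachable v y) := by
  induction p with
  | nil => simp at h
  | cons ha q ih =>
    rename_i a b c
    rw [SimpleGraph.Walk.edges_cons, List.nodup_cons] at hp
    rw [SimpleGraph.Walk.edges_cons, List.mem_cons] at h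
    rcases h with h | h
    · -- s(v,w) = s(a,b)
      have hq : ∀ e ∈ q.edges, e ∉ ({s(v,w)} : Set (Sym2 V)) := by
        intro e he hmem
        simp only [Set.mem_singleton_iff] at hmem
        subst hmem
        exact hp.1 (h ▸ he)
      have hr : (G.deleteEdges {s(v,w)}).Reachable b c :=
        ⟨q.toDeleteEdges _ hq⟩
      rcases Sym2.eq_iff.mp h.symm with ⟨hv, hw⟩ | ⟨hv, hw⟩
      · subst hv; subst hw; exact Or.inl ⟨SimpleGraph.Reachable.refl _, hr⟩
      · subst hv; subst hw; exact Or.inr ⟨SimpleGraph.Reachable.refl _, hr⟩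
    · have hne : s(a,b) ≠ s(v,w) := fun hh => hp.1 (hh ▸ h)
      have hedge : (G.deleteEdges {s(v,w)}).Adj a b := by
        rw [SimpleGraph.deleteEdges_adj]
        exact ⟨ha, by simpa using hne⟩
      rcases ih hp.2 h with ⟨h1, h2⟩ | ⟨h1, h2⟩
      · exact Or.inl ⟨hedge.reachable.trans h1, h2⟩
      · exact Or.inr ⟨hedge.reachable.trans h1, h2⟩

theorem two_edge_disjoint_paths_every_edge_in_cycle {V : Type*} (G : SimpleGraph V)
    (hG : G.Connected) {x y : V} (hxy : x ≠ y)
    (p₁ p₂ : G.Walk x y) (hp₁ : p₁.IsPath) (hp₂ : p₂.IsPath)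
    (hne : p₁ ≠ p₂)
    (hdisj : {f | f ∈ p₁.edges} ∩ {f | f ∈ p₂.edges} = ∅)
    (hcover : G.edgeSet = {f | f ∈ p₁.edges} ∪ {f | f ∈ p₂.edges}) :
    ∀ e ∈ G.edgeSet, ∃ (w : V) (c : G.Walk w w), c.IsCycle ∧ e ∈ c.edges := by
  intro e he
  induction e with
  | h v w =>
  have hadj : G.Adj v w := he
  rw [← SimpleGraph.adj_and_reachable_delete_edges_iff_exists_cycle]
  refine ⟨hadj, ?_⟩
  have hdelta : G \ SimpleGraph.fromEdgeSet {s(v,w)} = G.deleteEdges {s(v,w)} := rfl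
  rw [hcover] at he
  have key : ∀ (pa pb : G.Walk x y), pa.IsPath → pb.IsPath →
      ({f | f ∈ pa.edges} ∩ {f | f ∈ pb.edges} = ∅) → s(v,w) ∈ pa.edges →
      (G.deleteEdges {s(v,w)}).Reachable v w := by
    intro pa pb hpa hpb hd hmem
    have hpb' : (G.deleteEdges {s(v,w)}).Reachable x y := by
      refine ⟨pb.toDeleteEdges _ ?_⟩
      intro f hf hmemf
      simp only [Set.mem_singleton_iff] at hmemf
      subst hmemf
      have : s(v,w) ∈ ({f | f ∈ pa.edges} ∩ {f | f ∈ pb.edges} : Set (Sym2 V)) :=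
        ⟨hmem, hf⟩
      rw [hd] at this
      exact this
    rcases aux_split pa hpa.isTrail.edges_nodup hmem with ⟨h1, h2⟩ | ⟨h1, h2⟩
    · exact (h1.symm.trans hpb').trans h2.symm
    · exact (h2.trans hpb'.symm).trans h1
  rcases he with h | h
  · exact key p₁ p₂ hp₁ hp₂ hdisj h
  · exact key p₂ p₁ hp₂ hp₁ (by rw [Set.inter_comm] at hdisj; exact hdisj) h
end

section
/- Let T = (V,E) be a tree and let Ê be a set of edges on vertex set V with Ê ∩ E = ∅. Define H := (V, E ∪ Ê). Then H is not a cactus if and only if there exist two distinct edges in Ê such that the unique paths in T between their respective endpoints share at least one edge of T. -/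
open SimpleGraph List

namespace CactusAux

variable {V : Type*}

lemma eq_singleton_of_nodup {α : Type*} {m : List α} (h : m.Nodup) {e : α}
    (he : e ∈ m) (hall : ∀ g ∈ m, g = e) : m = [e] := by
  cases m with
  | nil => cases he
  | cons a t =>
    have ha := hall a List.mem_cons_self
    subst ha
    cases t with
    | nil => rfl
    | cons b t' =>
      exfalso
      have hb := hall b (by simp)
      subst hb
      simp at h

/-- crossing predicate for a cut `f` -/
def cross (f : V → Bool) : Sym2 V → Bool :=
  Sym2.lift ⟨fun x y => xor (f x) (f y), fun x y => Bool.xor_comm _ _⟩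

@[simp] lemma cross_mk (f : V → Bool) (x y : V) : cross f s(x, y) = xor (f x) (f y) := rfl

lemma parity {G : SimpleGraph V} (f : V → Bool) :
    ∀ {u v : V} (w : G.Walk u v), Even (w.edges.countP (cross f)) ↔ f u = f v := by
  intro u v w
  induction w with
  | nil => simp
  | @cons a c b h p ih =>
    rw [SimpleGraph.Walk.edges_cons, List.countP_cons]
    cases hcross : cross f s(a, c) with
    | false =>
      simp only [hcross, Bool.false_eq_true, if_false, Nat.add_zero, ih]
      simp only [cross_mk] at hcross
      cases ha : f a <;> cases hc : f c <;> cases hb : f b <;> simp_all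
    | true =>
      simp only [hcross, if_true, Nat.even_add_one, ih]
      simp only [cross_mk] at hcross
      cases ha : f a <;> cases hc : f c <;> cases hb : f b <;> simp_all

lemma exists_cut {T : SimpleGraph V} (hT : T.IsAcyclic) {e : Sym2 V} (he : e ∈ T.edgeSet) :
    ∃ f : V → Bool, ∀ x y, T.Adj x y → (cross f s(x, y) = true ↔ s(x, y) = e) := by
  classical
  induction e with
  | _ a b =>
    rw [SimpleGraph.mem_edgeSet] at he
    have hbr : T.IsBridge s(a, b) :=
      (isAcyclic_iff_forall_adj_isBridge.mp hT) he
    rw [isBridge_iff] at hbr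
    set T' : SimpleGraph V := T \ fromEdgeSet {s(a, b)} with hT'
    refine ⟨fun x => decide (T'.Reachable a x), ?_⟩
    intro x y hxy
    by_cases hcase : s(x, y) = s(a, b)
    · simp only [hcase, iff_true, cross_mk]
      rw [Sym2.eq_iff] at hcase
      have h1 : T'.Reachable a a := Reachable.refl a
      have h2 : ¬ T'.Reachable a b := hbr
      rcases hcase with ⟨rfl, rfl⟩ | ⟨rfl, rfl⟩ <;> simp [h1, h2]
    · simp only [hcase, iff_false, cross_mk]
      have hadj : T'.Adj x y := by
        rw [hT', SimpleGraph.sdiff_adj]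
        refine ⟨hxy, ?_⟩
        rw [SimpleGraph.fromEdgeSet_adj]
        rintro ⟨hmem, -⟩
        exact hcase hmem
      have : T'.Reachable a x ↔ T'.Reachable a y :=
        ⟨fun h => h.trans hadj.reachable, fun h => h.trans hadj.symm.reachable⟩
      have hd : decide (T'.Reachable a x) = decide (T'.Reachable a y) := by
        rw [decide_eq_decide]; exact this
      simp [hd]

lemma mem_path_iff_cut {T : SimpleGraph V} {e : Sym2 V} {f : V → Bool}
    (hf : ∀ x y, T.Adj x y → (cross f s(x, y) = true ↔ s(x, y) = e))
    {x y : V} {p : T.Walk x y} (hp : p.IsPath) : e ∈ p.edges ↔ f x ≠ f y := by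
  have hiff : ∀ g ∈ p.edges, (cross f g = true ↔ g = e) := by
    intro g hg
    induction g with
    | _ c d => exact hf c d (p.adj_of_mem_edges hg)
  constructor
  · intro he hxy
    have heven := (parity (G := T) f p).mpr hxy
    have hfil : p.edges.filter (cross f) = [e] := by
      refine eq_singleton_of_nodup (hp.isTrail.edges_nodup.filter _) ?_ ?_
      · rw [List.mem_filter]
        exact ⟨he, (hiff e he).mpr rfl⟩
      · intro g hg
        rw [List.mem_filter] at hg
        exact (hiff g hg.1).mp hg.2
    rw [List.countP_eq_length_filter, hfil] at heven
    simp at heven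
  · intro hxy
    by_contra he
    have : p.edges.countP (cross f) = 0 := by
      rw [List.countP_eq_zero]
      intro g hg hcr
      exact he ((hiff g hg).mp hcr ▸ hg)
    exact hxy ((parity (G := T) f p).mp (by rw [this]; exact Even.zero))

lemma darts_snd_nodup {G : SimpleGraph V} {u : V} {C : G.Walk u u} (hC : C.IsCycle) :
    (C.darts.map (·.snd)).Nodup := by
  rw [SimpleGraph.Walk.map_snd_darts]
  exact hC.support_nodup

lemma darts_fst_nodup {G : SimpleGraph V} {u : V} {C : G.Walk u u} (hC : C.IsCycle) :
    (C.darts.map (·.fst)).Nodup := by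
  rw [SimpleGraph.Walk.map_fst_darts]
  have hsup : C.support = u :: C.support.tail := C.support_eq_cons
  have htne : C.support.tail ≠ [] := by
    intro h
    have h3 := hC.three_le_length
    have : C.support.tail.length = C.length := by
      simp [SimpleGraph.Walk.length_support C]
    rw [h] at this
    simp at this
    omega
  have hlast : C.support.tail.getLast htne = u := by
    have h1 := C.getLast_support
    have h2 : C.support.getLast (by simp) = (u :: C.support.tail).getLast (by simp) :=
      List.getLast_congr _ _ hsup
    rw [h2, List.getLast_cons htne] at h1
    exact h1
  rw [hsup, List.dropLast_cons_of_ne_nil htne]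
  have htail : C.support.tail.Nodup := hC.support_nodup
  have hdecomp : C.support.tail = C.support.tail.dropLast ++ [u] := by
    conv_lhs => rw [← List.dropLast_append_getLast htne]
    rw [hlast]
  rw [List.nodup_cons]
  constructor
  · intro hu
    rw [hdecomp, List.nodup_append] at htail
    exact htail.2.2 u hu u (by simp) rfl
  · exact htail.sublist (List.dropLast_sublist _)

lemma three_distinct_edges {G : SimpleGraph V} {u : V} {C : G.Walk u u} (hC : C.IsCycle)
    {v : V} {e₁ e₂ e₃ : Sym2 V}
    (h1 : e₁ ∈ C.edges) (h2 : e₂ ∈ C.edges) (h3 : e₃ ∈ C.edges)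
    (d12 : e₁ ≠ e₂) (d13 : e₁ ≠ e₃) (d23 : e₂ ≠ e₃)
    (m1 : v ∈ e₁) (m2 : v ∈ e₂) (m3 : v ∈ e₃) : False := by
  have hedges : C.edges = C.darts.map SimpleGraph.Dart.edge := rfl
  rw [hedges, List.mem_map] at h1 h2 h3
  obtain ⟨d₁, hd₁, he₁⟩ := h1
  obtain ⟨d₂, hd₂, he₂⟩ := h2
  obtain ⟨d₃, hd₃, he₃⟩ := h3
  have key : ∀ d d' : G.Dart, d ∈ C.darts → d' ∈ C.darts →
      ((d.fst = v ∧ d'.fst = v) ∨ (d.snd = v ∧ d'.snd = v)) → d = d' := by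
    rintro d d' hd hd' (⟨hv, hv'⟩ | ⟨hv, hv'⟩)
    · exact List.inj_on_of_nodup_map (darts_fst_nodup hC) hd hd' (hv.trans hv'.symm)
    · exact List.inj_on_of_nodup_map (darts_snd_nodup hC) hd hd' (hv.trans hv'.symm)
  have side : ∀ (d : G.Dart) (e : Sym2 V), d.edge = e → v ∈ e → d.fst = v ∨ d.snd = v := by
    rintro d e rfl hv
    rw [SimpleGraph.Dart.edge_mk, Sym2.mem_iff] at hv
    exact hv.imp Eq.symm Eq.symm
  have o1 := side d₁ e₁ he₁ m1
  have o2 := side d₂ e₂ he₂ m2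
  have o3 := side d₃ e₃ he₃ m3
  have n12 : d₁ ≠ d₂ := fun h => d12 (he₁ ▸ he₂ ▸ h ▸ rfl)
  have n13 : d₁ ≠ d₃ := fun h => d13 (he₁ ▸ he₃ ▸ h ▸ rfl)
  have n23 : d₂ ≠ d₃ := fun h => d23 (he₂ ▸ he₃ ▸ h ▸ rfl)
  rcases o1 with o1 | o1 <;> rcases o2 with o2 | o2 <;> rcases o3 with o3 | o3
  · exact n12 (key _ _ hd₁ hd₂ (Or.inl ⟨o1, o2⟩))
  · exact n12 (key _ _ hd₁ hd₂ (Or.inl ⟨o1, o2⟩))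
  · exact n13 (key _ _ hd₁ hd₃ (Or.inl ⟨o1, o3⟩))
  · exact n23 (key _ _ hd₂ hd₃ (Or.inr ⟨o2, o3⟩))
  · exact n23 (key _ _ hd₂ hd₃ (Or.inl ⟨o2, o3⟩))
  · exact n13 (key _ _ hd₁ hd₃ (Or.inr ⟨o1, o3⟩))
  · exact n12 (key _ _ hd₁ hd₂ (Or.inr ⟨o1, o2⟩))
  · exact n12 (key _ _ hd₁ hd₂ (Or.inr ⟨o1, o2⟩))

lemma two_incident {G : SimpleGraph V} {v : V} {D : G.Walk v v} (hD : D.IsCycle)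
    {x : V} (hx : x ∈ D.support) :
    ∃ e₁ e₂, e₁ ∈ D.edges ∧ e₂ ∈ D.edges ∧ e₁ ≠ e₂ ∧ x ∈ e₁ ∧ x ∈ e₂ := by
  classical
  have hE : (D.rotate x hx).IsCycle := hD.rotate hx
  have hperm : (D.rotate x hx).edges ~ D.edges := (D.rotate_edges x hx).perm
  suffices h : ∃ e₁ e₂, e₁ ∈ (D.rotate x hx).edges ∧ e₂ ∈ (D.rotate x hx).edges ∧
      e₁ ≠ e₂ ∧ x ∈ e₁ ∧ x ∈ e₂ by
    obtain ⟨e₁, e₂, h1, h2, h3, h4, h5⟩ := h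
    exact ⟨e₁, e₂, hperm.mem_iff.mp h1, hperm.mem_iff.mp h2, h3, h4, h5⟩
  clear hperm
  generalize D.rotate x hx = E at hE ⊢
  cases E with
  | nil => exact absurd rfl hE.ne_nil
  | @cons _ c _ h q =>
    have hdne : (Walk.cons h q).darts ≠ [] := by simp [Walk.darts_cons]
    set dlast := (Walk.cons h q).darts.getLast hdne with hdl
    have hsnd : dlast.snd = x := by rw [hdl, Walk.getLast_darts_eq_lastDart]; rfl
    have hmem1 : s(x, c) ∈ (Walk.cons h q).edges := by simp [Walk.edges_cons]
    have hmem2 : dlast.edge ∈ (Walk.cons h q).edges := by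
      have : dlast ∈ (Walk.cons h q).darts := List.getLast_mem hdne
      exact List.mem_map_of_mem this
    refine ⟨s(x, c), dlast.edge, hmem1, hmem2, ?_, by simp, ?_⟩
    · intro heq
      -- first dart and last dart have the same edge
      have hd0 : (⟨(x, c), h⟩ : G.Dart) ∈ (Walk.cons h q).darts := by
        rw [Walk.darts_cons]; exact List.mem_cons_self
      have hdlmem : dlast ∈ (Walk.cons h q).darts := List.getLast_mem hdne
      have hnodup : ((Walk.cons h q).darts.map SimpleGraph.Dart.edge).Nodup :=
        hE.isCircuit.isTrail.edges_nodup
      have heq' : (⟨(x, c), h⟩ : G.Dart) = dlast :=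
        List.inj_on_of_nodup_map hnodup hd0 hdlmem (by rw [← heq]; rfl)
      have : c = x := by
        have := congrArg (·.snd) heq'
        simpa [hsnd] using this
      exact h.ne' (by rw [this])
    · -- x ∈ dlast.edge
      rw [SimpleGraph.Dart.edge, Sym2.mem_iff]
      right
      exact hsnd.symm

lemma cycle_edges_subset {G : SimpleGraph V} {u v : V} {C : G.Walk u u} {D : G.Walk v v}
    (hC : C.IsCycle) (hD : D.IsCycle) (hsub : ∀ e ∈ D.edges, e ∈ C.edges) :
    ∀ e ∈ C.edges, e ∈ D.edges := by
  have closure : ∀ x ∈ D.support, ∀ g ∈ C.edges, x ∈ g → g ∈ D.edges := by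
    intro x hx g hg hxg
    obtain ⟨e₁, e₂, h1, h2, hne, m1, m2⟩ := two_incident hD hx
    by_cases hg1 : g = e₁
    · exact hg1 ▸ h1
    by_cases hg2 : g = e₂
    · exact hg2 ▸ h2
    exact absurd (three_distinct_edges hC hg (hsub e₁ h1) (hsub e₂ h2)
      hg1 hg2 hne hxg m1 m2) not_false
  have hvD : v ∈ D.support := D.start_mem_support
  have hvC : v ∈ C.support := by
    obtain ⟨e₁, _, h1, _, _, m1, _⟩ := two_incident hD hvD
    induction e₁ with
    | _ a b =>
      rcases Sym2.mem_iff.mp m1 with rfl | rfl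
      · exact Walk.fst_mem_support_of_mem_edges C (hsub _ h1)
      · exact Walk.snd_mem_support_of_mem_edges C (hsub _ h1)
  have reach : ∀ x ∈ C.support, x ∈ D.support := by
    have aux : ∀ (a b : C.toSubgraph.verts) (w : C.toSubgraph.coe.Walk a b),
        (a : V) ∈ D.support → (b : V) ∈ D.support := by
      intro a b w
      induction w with
      | nil => exact id
      | @cons p q r h w ih =>
        intro hp
        refine ih ?_
        have hadj : C.toSubgraph.Adj p q := h
        have hedge : s(p.1, q.1) ∈ C.edges :=
          (C.mem_edges_toSubgraph).mp (SimpleGraph.Subgraph.mem_edgeSet.mpr hadj)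
        have := closure p.1 hp _ hedge (Sym2.mem_mk_left _ _)
        exact Walk.snd_mem_support_of_mem_edges D this
    intro x hxC
    have hx' : x ∈ C.toSubgraph.verts := (C.mem_verts_toSubgraph).mpr hxC
    have hv' : v ∈ C.toSubgraph.verts := (C.mem_verts_toSubgraph).mpr hvC
    obtain ⟨w⟩ := C.toSubgraph_connected ⟨v, hv'⟩ ⟨x, hx'⟩
    exact aux _ _ w hvD
  intro e he
  induction e with
  | _ a b =>
    have haC : a ∈ C.support := Walk.fst_mem_support_of_mem_edges C he
    exact closure a (reach a haC) _ he (Sym2.mem_mk_left _ _)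

lemma edges_mapLe {G G' : SimpleGraph V} (h : G ≤ G') {u v : V} (p : G.Walk u v) :
    (Walk.mapLe h p).edges = p.edges := by
  rw [Walk.mapLe, Walk.edges_map]
  have : Sym2.map ⇑(Hom.ofLE h) = id := by
    funext e
    induction e with
    | _ a b => rfl
  rw [this, List.map_id]

/-- The fundamental cycle of a chord `s(a,b)`. -/
lemma fund_cycle {T : SimpleGraph V} {Ehat : Set (Sym2 V)}
    (hloop : ∀ e ∈ Ehat, ¬e.IsDiag) (hdisj : Ehat ∩ T.edgeSet = ∅)
    {a b : V} (hab : s(a, b) ∈ Ehat) {p : T.Walk a b} (hp : p.IsPath) :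
    ∃ D : (T ⊔ SimpleGraph.fromEdgeSet Ehat).Walk b b, D.IsCycle ∧
      D.edges = s(a, b) :: p.edges := by
  have hne : a ≠ b := fun h => hloop _ hab (by rw [h]; exact Sym2.mk_isDiag_iff.mpr rfl)
  have hAdj : (T ⊔ SimpleGraph.fromEdgeSet Ehat).Adj b a := by
    rw [SimpleGraph.sup_adj]
    right
    rw [SimpleGraph.fromEdgeSet_adj]
    exact ⟨by rw [Sym2.eq_swap]; exact hab, hne.symm⟩
  refine ⟨Walk.cons hAdj (Walk.mapLe le_sup_left p), ?_, ?_⟩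
  · rw [Walk.cons_isCycle_iff]
    constructor
    · exact (Walk.mapLe_isPath le_sup_left).mpr hp
    · rw [edges_mapLe]
      intro hmem
      have : s(b, a) ∈ T.edgeSet := p.edges_subset_edgeSet hmem
      have : s(a, b) ∈ Ehat ∩ T.edgeSet := ⟨hab, by rwa [Sym2.eq_swap]⟩
      rw [hdisj] at this
      exact this
  · rw [Walk.edges_cons, edges_mapLe, Sym2.eq_swap]

lemma cycle_structure {T : SimpleGraph V} (hT : T.IsTree) {Ehat : Set (Sym2 V)}
    (hloop : ∀ e ∈ Ehat, ¬e.IsDiag) (hdisj : Ehat ∩ T.edgeSet = ∅)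
    (P : ∀ a b : V, T.Walk a b) (hP : ∀ a b, (P a b).IsPath)
    (hdis : ∀ a b c d : V, s(a, b) ∈ Ehat → s(c, d) ∈ Ehat → s(a, b) ≠ s(c, d) →
      ∀ e, ¬(e ∈ (P a b).edges ∧ e ∈ (P c d).edges))
    {u : V} (C : (T ⊔ SimpleGraph.fromEdgeSet Ehat).Walk u u) (hC : C.IsCycle) :
    ∃ a b : V, s(a, b) ∈ Ehat ∧ s(a, b) ∈ C.edges ∧
      ∀ e, e ∈ C.edges ↔ (e = s(a, b) ∨ e ∈ (P a b).edges) := by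
  classical
  have hnotT : ∀ e ∈ Ehat, e ∉ T.edgeSet := by
    intro e he hT'
    have : e ∈ Ehat ∩ T.edgeSet := ⟨he, hT'⟩
    rw [hdisj] at this
    exact this
  have hedge : ∀ e ∈ C.edges, e ∈ T.edgeSet ∨ e ∈ Ehat := by
    intro e he
    have := C.edges_subset_edgeSet he
    rw [SimpleGraph.edgeSet_sup, SimpleGraph.edgeSet_fromEdgeSet] at this
    exact this.imp id fun h => h.1
  -- there is a chord on the cycle
  have hex : ∃ g ∈ C.edges, g ∈ Ehat := by
    by_contra hno
    push_neg at hno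
    have hall : ∀ e ∈ C.edges, e ∈ T.edgeSet := by
      intro e he
      rcases hedge e he with h | h
      · exact h
      · exact absurd h (hno e he)
    exact hT.IsAcyclic (C.transfer T hall) (hC.transfer hall)
  -- the key parity characterization of the tree edges on the cycle
  have key : ∀ e ∈ T.edgeSet, (e ∈ C.edges ↔
      ∃ c d : V, s(c, d) ∈ Ehat ∧ s(c, d) ∈ C.edges ∧ e ∈ (P c d).edges) := by
    intro e heT
    obtain ⟨f, hf⟩ := exists_cut hT.IsAcyclic heT
    have hpar : Even (C.edges.countP (cross f)) := (parity f C).mpr rfl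
    set l := C.edges.filter (cross f) with hl
    have hlen : C.edges.countP (cross f) = l.length := List.countP_eq_length_filter
    have hnodup : l.Nodup := hC.isCircuit.isTrail.edges_nodup.filter _
    have hmeml : ∀ g, g ∈ l ↔ g ∈ C.edges ∧ cross f g = true := fun g => List.mem_filter
    have fact1 : ∀ g ∈ l, g = e ∨
        ∃ c d : V, s(c, d) ∈ Ehat ∧ g = s(c, d) ∧ e ∈ (P c d).edges := by
      intro g hg
      rw [hmeml] at hg
      rcases hedge g hg.1 with hgT | hgE
      · left
        induction g with
        | _ c d =>
          exact (hf c d ((SimpleGraph.mem_edgeSet _).mp hgT)).mp hg.2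
      · right
        induction g with
        | _ c d =>
          refine ⟨c, d, hgE, rfl, ?_⟩
          rw [mem_path_iff_cut hf (hP c d)]
          have := hg.2
          rw [cross_mk] at this
          simpa using this
    have fact2 : e ∈ C.edges → e ∈ l := by
      intro he
      rw [hmeml]
      refine ⟨he, ?_⟩
      induction e with
      | _ x y => exact (hf x y ((SimpleGraph.mem_edgeSet _).mp heT)).mpr rfl
    constructor
    · intro he
      by_contra hno
      push_neg at hno
      have hall : ∀ g ∈ l, g = e := by
        intro g hg
        rcases fact1 g hg with h | ⟨c, d, hcd, rfl, hpe⟩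
        · exact h
        · exact absurd hpe (by
            have := hno c d hcd ((hmeml _).mp hg).1
            exact this)
      have : l = [e] := eq_singleton_of_nodup hnodup (fact2 he) hall
      rw [hlen, this] at hpar
      simp at hpar
    · rintro ⟨c, d, hcd, hcdC, hpe⟩
      by_contra he
      have hcdl : s(c, d) ∈ l := by
        rw [hmeml]
        refine ⟨hcdC, ?_⟩
        rw [cross_mk]
        have := (mem_path_iff_cut hf (hP c d)).mp hpe
        simpa using this
      have hall : ∀ g ∈ l, g = s(c, d) := by
        intro g hg
        rcases fact1 g hg with rfl | ⟨c', d', hcd', rfl, hpe'⟩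
        · exact absurd ((hmeml _).mp hg).1 he
        · by_contra hnee
          exact hdis c' d' c d hcd' hcd hnee e ⟨hpe', hpe⟩
      have : l = [s(c, d)] := eq_singleton_of_nodup hnodup hcdl hall
      rw [hlen, this] at hpar
      simp at hpar
  -- conclude
  obtain ⟨g, hgC, hgE⟩ := hex
  induction g with
  | _ a b =>
    obtain ⟨D, hDcyc, hDedges⟩ := fund_cycle hloop hdisj hgE (hP a b)
    have hDsub : ∀ e ∈ D.edges, e ∈ C.edges := by
      intro e he
      rw [hDedges] at he
      rcases List.mem_cons.mp he with rfl | he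
      · exact hgC
      · exact (key e ((P a b).edges_subset_edgeSet he)).mpr ⟨a, b, hgE, hgC, he⟩
    have hCsub := cycle_edges_subset hC hDcyc hDsub
    refine ⟨a, b, hgE, hgC, fun e => ?_⟩
    constructor
    · intro he
      have := hCsub e he
      rw [hDedges] at this
      exact List.mem_cons.mp this
    · rintro (rfl | he)
      · exact hgC
      · exact hDsub e (by rw [hDedges]; exact List.mem_cons_of_mem _ he)

end CactusAux

open CactusAux

open SimpleGraph

theorem tree_plus_edges_cactus_iff {V : Type*} (T : SimpleGraph V) (hT : T.IsTree)
    (Ehat : Set (Sym2 V)) (hloop : ∀ e ∈ Ehat, ¬e.IsDiag)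
    (hdisj : Ehat ∩ T.edgeSet = ∅) :
    ¬(T ⊔ SimpleGraph.fromEdgeSet Ehat).IsCactus ↔
      ∃ a b c d : V, s(a, b) ∈ Ehat ∧ s(c, d) ∈ Ehat ∧ s(a, b) ≠ s(c, d) ∧
        ∀ (p : T.Walk a b) (q : T.Walk c d), p.IsPath → q.IsPath →
          ∃ e, e ∈ p.edges ∧ e ∈ q.edges := by
  classical
  have hUniq : ∀ {a b : V} (p q : T.Walk a b), p.IsPath → q.IsPath → p = q := by
    intro a b p q hp hq
    have := isAcyclic_iff_path_unique.mp hT.IsAcyclic ⟨p, hp⟩ ⟨q, hq⟩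
    exact congrArg Subtype.val this
  have hPex : ∀ a b : V, ∃ p : T.Walk a b, p.IsPath := by
    intro a b
    obtain ⟨w⟩ := hT.isConnected.preconnected a b
    exact ⟨(w.toPath : T.Path a b).1, (w.toPath : T.Path a b).2⟩
  choose P hP using hPex
  have hnotT : ∀ e ∈ Ehat, e ∉ T.edgeSet := by
    intro e he hT'
    have : e ∈ Ehat ∩ T.edgeSet := ⟨he, hT'⟩
    rw [hdisj] at this
    exact this
  constructor
  · intro hnc
    by_contra hno
    push_neg at hno
    apply hnc
    have hdis : ∀ a b c d : V, s(a, b) ∈ Ehat → s(c, d) ∈ Ehat → s(a, b) ≠ s(c, d) →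
        ∀ e, ¬(e ∈ (P a b).edges ∧ e ∈ (P c d).edges) := by
      intro a b c d hab hcd hne e he
      obtain ⟨p, q, hp, hq, h⟩ := hno a b c d hab hcd hne
      rw [hUniq (P a b) p (hP a b) hp, hUniq (P c d) q (hP c d) hq] at he
      exact absurd he.2 (h e he.1)
    refine ⟨(hT.isConnected.mono le_sup_left), ?_⟩
    intro u v c₁ c₂ h1 h2 e he1 he2
    obtain ⟨a, b, hab, habC, hiff₁⟩ := cycle_structure hT hloop hdisj P hP hdis c₁ h1
    obtain ⟨c, d, hcd, hcdC, hiff₂⟩ := cycle_structure hT hloop hdisj P hP hdis c₂ h2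
    have habcd : s(a, b) = s(c, d) := by
      rcases (hiff₁ e).mp he1 with rfl | hep
      · rcases (hiff₂ _).mp he2 with h | hep2
        · exact h
        · exact absurd ((P c d).edges_subset_edgeSet hep2) (hnotT _ hab)
      · rcases (hiff₂ e).mp he2 with heq | hep2
        · exact absurd ((P a b).edges_subset_edgeSet hep) (heq ▸ hnotT _ hcd)
        · by_contra hne
          exact hdis a b c d hab hcd hne e ⟨hep, hep2⟩
    have hPedges : ∀ x, x ∈ (P a b).edges ↔ x ∈ (P c d).edges := by
      rcases Sym2.eq_iff.mp habcd with ⟨rfl, rfl⟩ | ⟨rfl, rfl⟩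
      · intro x; rfl
      · intro x
        have : P b a = (P a b).reverse := hUniq _ _ (hP b a) ((hP a b).reverse)
        rw [this, Walk.edges_reverse, List.mem_reverse]
    ext x
    simp only [Set.mem_setOf_eq, hiff₁ x, hiff₂ x]
    exact or_congr (by rw [habcd]) (hPedges x)
  · rintro ⟨a, b, c, d, hab, hcd, hne, hall⟩ ⟨hconn, hcac⟩
    obtain ⟨D₁, h1, hE1⟩ := fund_cycle hloop hdisj hab (hP a b)
    obtain ⟨D₂, h2, hE2⟩ := fund_cycle hloop hdisj hcd (hP c d)
    obtain ⟨e, hep, heq⟩ := hall (P a b) (P c d) (hP a b) (hP c d)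
    have he1 : e ∈ D₁.edges := by rw [hE1]; exact List.mem_cons_of_mem _ hep
    have he2 : e ∈ D₂.edges := by rw [hE2]; exact List.mem_cons_of_mem _ heq
    have hsets := hcac D₁ D₂ h1 h2 e he1 he2
    have hab1 : s(a, b) ∈ {f | f ∈ D₁.edges} := by
      rw [Set.mem_setOf_eq, hE1]
      exact List.mem_cons_self
    rw [hsets] at hab1
    rw [Set.mem_setOf_eq, hE2] at hab1
    rcases List.mem_cons.mp hab1 with h | h
    · exact hne h
    · exact hnotT _ hab ((P c d).edges_subset_edgeSet h)
end

section
/- Let H = (V,E) be a connected graph that is not a cactus, with |V| ≥ 5. Then there exists a spanning cactus subgraph of H with the maximum number of edges among all spanning cactus subgraphs of H that has a cut vertex. -/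
open SimpleGraph

/-- A cut vertex of a connected graph: removing it disconnects the graph. -/
def SimpleGraph.IsCutVertex {V : Type*} (G : SimpleGraph V) (x : V) : Prop :=
  G.Connected ∧ ¬(((⊤ : G.Subgraph).deleteVerts {x}).coe.Connected)

namespace CactusAux

open SimpleGraph Walk

variable {V : Type*}

private lemma reach_mono {G G' : SimpleGraph V}
    (h : ∀ p q : V, G.Adj p q → G'.Reachable p q) {u c : V} (W : G.Walk u c) :
    G'.Reachable u c := by
  induction W with
  | nil => exact Reachable.refl _
  | cons h' p ih => exact (h _ _ h').trans ih

private lemma connected_sdiff_of_reachable {G : SimpleGraph V} {x y : V}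
    (hG : G.Connected) (h : (G \ fromEdgeSet {s(x, y)}).Reachable x y) :
    (G \ fromEdgeSet {s(x, y)}).Connected := by
  have hne : Nonempty V := hG.nonempty
  rw [connected_iff]
  refine ⟨fun p q => ?_, hne⟩
  obtain ⟨W⟩ := hG.preconnected p q
  refine reach_mono (fun a b hab => ?_) W
  by_cases he : s(a, b) = s(x, y)
  · rw [Sym2.eq_iff] at he
    rcases he with ⟨rfl, rfl⟩ | ⟨rfl, rfl⟩
    · exact h
    · exact h.symm
  · refine Adj.reachable ?_
    rw [sdiff_adj, fromEdgeSet_adj]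
    exact ⟨hab, by simp [he]⟩

private lemma connected_sdiff_of_cycle {G : SimpleGraph V} (hG : G.Connected)
    {u : V} {c : G.Walk u u} (hc : c.IsCycle) {e : Sym2 V} (he : e ∈ c.edges) :
    (G \ fromEdgeSet {e}).Connected := by
  induction e using Sym2.ind with
  | _ x y =>
    exact connected_sdiff_of_reachable hG
      (adj_and_reachable_delete_edges_iff_exists_cycle.mpr ⟨u, c, hc, he⟩).2

private lemma edgeSet_sdiff_single {G : SimpleGraph V} {e : Sym2 V} :
    (G \ fromEdgeSet {e}).edgeSet = G.edgeSet \ {e} := by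
  rw [edgeSet_sdiff, edgeSet_fromEdgeSet, edgeSet_sdiff_sdiff_isDiag]

private lemma exists_spanning_tree [Finite V] (G : SimpleGraph V) (hG : G.Connected) :
    ∃ T : SimpleGraph V, T ≤ G ∧ T.IsTree := by
  classical
  have hfin : {T : SimpleGraph V | T ≤ G ∧ T.Connected}.Finite := Set.toFinite _
  obtain ⟨T, hT, hmin⟩ := Set.exists_min_image _ (fun T => T.edgeSet.ncard) hfin
    ⟨G, le_refl _, hG⟩
  refine ⟨T, hT.1, ⟨hT.2, fun v c hc => ?_⟩⟩
  have h3 : c.edges ≠ [] := by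
    have := hc.three_le_length
    intro h
    rw [← Walk.length_edges, h] at this
    simp at this
  obtain ⟨e, he⟩ := List.exists_mem_of_ne_nil _ h3
  have hconn' : (T \ fromEdgeSet {e}).Connected := connected_sdiff_of_cycle hT.2 hc he
  have hle : (T \ fromEdgeSet {e}) ≤ G := le_trans (sdiff_le) hT.1
  have hcard := hmin _ ⟨hle, hconn'⟩
  have heT : e ∈ T.edgeSet := Walk.edges_subset_edgeSet c he
  rw [edgeSet_sdiff_single] at hcard
  have hlt : (T.edgeSet \ {e}).ncard < T.edgeSet.ncard := by
    refine Set.ncard_lt_ncard ?_ (Set.toFinite _)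
    exact Set.sdiff_singleton_ssubset.mpr heT
  omega

private lemma card_le_of_connected [Fintype V] (G : SimpleGraph V) (hG : G.Connected) :
    Fintype.card V ≤ G.edgeSet.ncard + 1 := by
  classical
  obtain ⟨T, hle, hT⟩ := exists_spanning_tree G hG
  have h1 := hT.card_edgeFinset
  have h2 : T.edgeSet.ncard ≤ G.edgeSet.ncard :=
    Set.ncard_le_ncard (edgeSet_mono hle) (Set.toFinite _)
  have h3 : T.edgeFinset.card = T.edgeSet.ncard := (Set.ncard_eq_toFinset_card' _).symm
  omega

private lemma unicyclic_cactus_prop [Fintype V] {G : SimpleGraph V} (hG : G.Connected)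
    (hcard : G.edgeSet.ncard ≤ Fintype.card V) {u v : V}
    (c₁ : G.Walk u u) (c₂ : G.Walk v v) (hc₁ : c₁.IsCycle) (hc₂ : c₂.IsCycle)
    {f : Sym2 V} (hf1 : f ∈ c₁.edges) (hf2 : f ∉ c₂.edges) : False := by
  classical
  have hfG : f ∈ G.edgeSet := Walk.edges_subset_edgeSet c₁ hf1
  set G1 := G \ fromEdgeSet {f} with hG1
  have hG1conn : G1.Connected := connected_sdiff_of_cycle hG hc₁ hf1
  have hsub : ∀ e ∈ c₂.edges, e ∈ G1.edgeSet := by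
    intro e he
    rw [hG1, edgeSet_sdiff_single]
    exact ⟨Walk.edges_subset_edgeSet c₂ he, by rintro rfl; exact hf2 he⟩
  set c₂' := c₂.transfer G1 hsub with hc₂'def
  have hc₂' : c₂'.IsCycle := hc₂.transfer hsub
  have h3 : c₂'.edges ≠ [] := by
    have := hc₂'.three_le_length
    intro h
    rw [← Walk.length_edges, h] at this
    simp at this
  obtain ⟨e', he'⟩ := List.exists_mem_of_ne_nil _ h3
  have hG2conn : (G1 \ fromEdgeSet {e'}).Connected :=
    connected_sdiff_of_cycle hG1conn hc₂' he'
  have he'G1 : e' ∈ G1.edgeSet := Walk.edges_subset_edgeSet c₂' he'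
  have hcount := card_le_of_connected _ hG2conn
  rw [edgeSet_sdiff_single] at hcount
  rw [hG1, edgeSet_sdiff_single] at hcount he'G1
  have hne : e' ≠ f := fun h => he'G1.2 (by rw [h]; rfl)
  have hc1 : ((G.edgeSet \ {f}) \ {e'}).ncard = G.edgeSet.ncard - 2 := by
    rw [Set.diff_diff, Set.ncard_diff (by
      rintro x (rfl | rfl : x = f ∨ x = e')
      · exact hfG
      · exact he'G1.1) (Set.toFinite _)]
    have : ({f} ∪ {e'} : Set (Sym2 V)) = {f, e'} := by rw [Set.singleton_union]
    rw [this, Set.ncard_pair (Ne.symm hne)]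
  have h2le : 2 ≤ G.edgeSet.ncard := by
    have : ({f, e'} : Set (Sym2 V)).ncard ≤ G.edgeSet.ncard := by
      refine Set.ncard_le_ncard ?_ (Set.toFinite _)
      rintro x (rfl | rfl : x = f ∨ x = e')
      · exact hfG
      · exact he'G1.1
    rwa [Set.ncard_pair hne.symm] at this
  omega

private lemma pendant_cut {G : SimpleGraph V} (hG : G.Connected) {a b y : V}
    (hnb : G.neighborSet a ⊆ {b}) (hab : a ≠ b) (hya : y ≠ a) (hyb : y ≠ b) :
    G.IsCutVertex b := by
  classical
  refine ⟨hG, fun hconn => ?_⟩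
  have ha : a ∈ ((⊤ : G.Subgraph).deleteVerts {b}).verts := by simp [hab]
  have hy : y ∈ ((⊤ : G.Subgraph).deleteVerts {b}).verts := by simp [hyb]
  obtain ⟨W⟩ := hconn.preconnected ⟨a, ha⟩ ⟨y, hy⟩
  cases W with
  | nil => exact hya rfl
  | cons h p =>
    rename_i z
    have := h
    simp only [Subgraph.coe_adj, Subgraph.deleteVerts_adj, Subgraph.top_adj] at this
    have hz : (z : V) ∈ G.neighborSet a := this.2.2.2.2
    have hzb : (z : V) = b := hnb hz
    exact this.2.2.2.1 (by rw [hzb]; exact rfl)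

private lemma cycle_two_nbrs {G : SimpleGraph V} {w a b : V}
    (hwa : G.Adj w a) (hwb : G.Adj w b) (hab : a ≠ b)
    (hconn : ((⊤ : G.Subgraph).deleteVerts {w}).coe.Connected) :
    ∃ (c : G.Walk a a), c.IsCycle ∧ s(w, a) ∈ c.edges ∧ s(w, b) ∈ c.edges ∧
      ∀ x : V, x ≠ a → x ≠ b → s(w, x) ∉ c.edges := by
  classical
  have ha : a ∈ ((⊤ : G.Subgraph).deleteVerts {w}).verts := by simp [hwa.ne']
  have hb : b ∈ ((⊤ : G.Subgraph).deleteVerts {w}).verts := by simp [hwb.ne']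
  obtain ⟨W0⟩ := hconn.preconnected ⟨a, ha⟩ ⟨b, hb⟩
  set W : G.Walk a b := W0.map ((⊤ : G.Subgraph).deleteVerts {w}).hom with hW
  have hWsup : w ∉ W.support := by
    rw [hW]
    intro hmem
    have hmem : w ∈ (W0.map ((⊤ : G.Subgraph).deleteVerts {w}).hom).support := hmem
    rw [Walk.support_map, List.mem_map] at hmem
    obtain ⟨x, _, hx⟩ := hmem
    exact x.2.2 (by simp [← hx])
  set P := W.bypass with hP
  have hPpath : P.IsPath := W.bypass_isPath
  have hPsup : w ∉ P.support := fun h => hWsup (W.support_bypass_subset h)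
  set Q : G.Walk w a := Walk.cons hwb P.reverse with hQ
  have hQpath : Q.IsPath := by
    rw [hQ, Walk.cons_isPath_iff]
    exact ⟨hPpath.reverse, by rwa [Walk.support_reverse, List.mem_reverse]⟩
  have hQedges : Q.edges = s(w, b) :: P.reverse.edges := rfl
  have hnotin : s(a, w) ∉ Q.edges := by
    rw [hQedges]
    intro hmem
    rcases List.mem_cons.mp hmem with h | h
    · rw [Sym2.eq_iff] at h
      rcases h with ⟨h1, h2⟩ | ⟨h1, h2⟩
      · exact hwa.ne' h1
      · exact hab h1
    · exact hPsup (by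
        have := Walk.snd_mem_support_of_mem_edges _ h
        rwa [Walk.support_reverse, List.mem_reverse] at this)
  refine ⟨Walk.cons hwa.symm Q, (Walk.cons_isCycle_iff Q hwa.symm).mpr ⟨hQpath, hnotin⟩, ?_, ?_, ?_⟩
  · rw [Walk.edges_cons]
    exact List.mem_cons.mpr (Or.inl (Sym2.eq_swap))
  · rw [Walk.edges_cons, hQedges]
    exact List.mem_cons.mpr (Or.inr List.mem_cons_self)
  · intro x hxa hxb hmem
    rw [Walk.edges_cons, hQedges] at hmem
    rcases List.mem_cons.mp hmem with h | h
    · rw [Sym2.eq_iff] at h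
      rcases h with ⟨h1, h2⟩ | ⟨h1, h2⟩
      · exact hwa.ne h1
      · exact hxa h2
    · rcases List.mem_cons.mp h with h | h
      · rw [Sym2.eq_iff] at h
        rcases h with ⟨h1, h2⟩ | ⟨h1, h2⟩
        · exact hxb h2
        · exact hwb.ne h1
      · exact hPsup (by
          have := Walk.fst_mem_support_of_mem_edges _ h
          rwa [Walk.support_reverse, List.mem_reverse] at this)

end CactusAux

open CactusAux

theorem max_spanning_cactus_with_cut_vertex {V : Type*} [Fintype V]
    (H : SimpleGraph V) (hH : H.Connected) (hnc : ¬H.IsCactus)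
    (hcard : 5 ≤ Fintype.card V) :
    ∃ C : SimpleGraph V, C ≤ H ∧ C.IsCactus ∧
      (∀ C' : SimpleGraph V, C' ≤ H → C'.IsCactus →
        C'.edgeSet.ncard ≤ C.edgeSet.ncard) ∧
      ∃ x : V, C.IsCutVertex x := by
  classical
  obtain ⟨T, hTle, hTtree⟩ := exists_spanning_tree H hH
  have hTcactus : T.IsCactus :=
    ⟨hTtree.isConnected, fun u v c₁ c₂ hc₁ _ _ _ _ => absurd hc₁ (hTtree.IsAcyclic c₁)⟩
  set S : Set (SimpleGraph V) := {C | C ≤ H ∧ C.IsCactus} with hS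
  have hfin : S.Finite := Set.toFinite _
  obtain ⟨C, hCS, hmax⟩ := Set.exists_max_image S (fun C => C.edgeSet.ncard) hfin
    ⟨T, hTle, hTcactus⟩
  obtain ⟨hCH, hCc⟩ := hCS
  by_cases hcut : ∃ x, C.IsCutVertex x
  · exact ⟨C, hCH, hCc, fun C' h1 h2 => hmax C' ⟨h1, h2⟩, hcut⟩
  push_neg at hcut
  have hCconn : C.Connected := hCc.1
  have hdel : ∀ x : V, ((⊤ : C.Subgraph).deleteVerts {x}).coe.Connected := by
    intro x
    by_contra h
    exact hcut x ⟨hCconn, h⟩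
  -- every vertex of C has degree 2
  have hdeg : ∀ w : V, C.degree w = 2 := by
    intro w
    have hpos : 0 < C.degree w := by
      obtain ⟨y, hy⟩ := Fintype.exists_ne_of_one_lt_card (by omega) w
      obtain ⟨W⟩ := hCconn.preconnected w y
      cases W with
      | nil => exact absurd rfl hy
      | cons h p => exact C.degree_pos_iff_exists_adj w |>.mpr ⟨_, h⟩
    have hne1 : C.degree w ≠ 1 := by
      intro h1
      obtain ⟨b, hb⟩ := Finset.card_eq_one.mp h1
      have hadj : C.Adj w b := by
        rw [← SimpleGraph.mem_neighborFinset, hb]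
        exact Finset.mem_singleton_self b
      have hnb : C.neighborSet w ⊆ {b} := by
        intro x hx
        have : x ∈ C.neighborFinset w := by rwa [SimpleGraph.mem_neighborFinset]
        rw [hb, Finset.mem_singleton] at this
        simp [this]
      obtain ⟨y, hy⟩ : ∃ y : V, y ∉ ({w, b} : Finset V) := by
        by_contra hc
        push_neg at hc
        have h2 : (Finset.univ : Finset V).card ≤ ({w, b} : Finset V).card :=
          Finset.card_le_card fun y _ => hc y
        have h3 : ({w, b} : Finset V).card ≤ 2 := Finset.card_insert_le _ _ |>.trans (by simp)
        rw [Finset.card_univ] at h2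
        omega
      simp only [Finset.mem_insert, Finset.mem_singleton, not_or] at hy
      exact hcut b (pendant_cut hCconn hnb hadj.ne hy.1 hy.2)
    have hle2 : C.degree w ≤ 2 := by
      by_contra h3
      push_neg at h3
      obtain ⟨a, ha⟩ : (C.neighborFinset w).Nonempty :=
        Finset.card_pos.mp (by have h3' : 2 < (C.neighborFinset w).card := h3; omega)
      obtain ⟨b, hb⟩ : ((C.neighborFinset w).erase a).Nonempty := by
        refine Finset.card_pos.mp ?_
        have h3' : 2 < (C.neighborFinset w).card := h3
        rw [Finset.card_erase_of_mem ha]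
        omega
      obtain ⟨c, hc⟩ : (((C.neighborFinset w).erase a).erase b).Nonempty := by
        refine Finset.card_pos.mp ?_
        have h3' : 2 < (C.neighborFinset w).card := h3
        rw [Finset.card_erase_of_mem hb, Finset.card_erase_of_mem ha]
        omega
      have hba : b ≠ a := (Finset.mem_erase.mp hb).1
      have hcb : c ≠ b := (Finset.mem_erase.mp hc).1
      have hca : c ≠ a := (Finset.mem_erase.mp (Finset.mem_of_mem_erase hc)).1
      have hwa : C.Adj w a := (SimpleGraph.mem_neighborFinset _ _ _).mp ha
      have hwb : C.Adj w b :=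
        (SimpleGraph.mem_neighborFinset _ _ _).mp (Finset.mem_of_mem_erase hb)
      have hwc : C.Adj w c :=
        (SimpleGraph.mem_neighborFinset _ _ _).mp
          (Finset.mem_of_mem_erase (Finset.mem_of_mem_erase hc))
      obtain ⟨c₁, hcy₁, hm₁a, hm₁b, -⟩ := cycle_two_nbrs hwa hwb hba.symm (hdel w)
      obtain ⟨c₂, hcy₂, hm₂b, -, hno₂⟩ := cycle_two_nbrs hwb hwc hcb.symm (hdel w)
      have heq := hCc.2 c₁ c₂ hcy₁ hcy₂ s(w, b) hm₁b hm₂b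
      have hmem : s(w, a) ∈ {f | f ∈ c₂.edges} := heq ▸ hm₁a
      exact hno₂ a hba.symm hca.symm hmem
    omega
  -- C has exactly |V| edges
  have hE : C.edgeSet.ncard = Fintype.card V := by
    have hhs := C.sum_degrees_eq_twice_card_edges
    have hsum : ∑ v : V, C.degree v = 2 * Fintype.card V := by
      rw [Finset.sum_congr rfl fun v _ => hdeg v]
      simp [Finset.card_univ, mul_comm]
    have hEF : C.edgeFinset.card = Fintype.card V := by omega
    rw [Set.ncard_eq_toFinset_card']
    exact hEF
  -- C is a proper subgraph of H
  have hneH : ¬ H ≤ C := by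
    intro hle
    exact hnc ((le_antisymm hCH hle) ▸ hCc)
  obtain ⟨u, v, huv, hCuv⟩ : ∃ u v, H.Adj u v ∧ ¬ C.Adj u v := by
    by_contra hcon
    push_neg at hcon
    exact hneH fun u v h => hcon u v h
  -- the two neighbors of u in C
  obtain ⟨a, b, hab, hnfu⟩ := Finset.card_eq_two.mp (hdeg u)
  have hua : C.Adj u a := by
    rw [← SimpleGraph.mem_neighborFinset, hnfu]; simp
  have hub : C.Adj u b := by
    rw [← SimpleGraph.mem_neighborFinset, hnfu]; simp
  have hav : a ≠ v := fun h => hCuv (h ▸ hua)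
  -- the other neighbor a' of a in C
  have hau : C.Adj a u := hua.symm
  obtain ⟨p, q, hpq, hnfa⟩ := Finset.card_eq_two.mp (hdeg a)
  have humem : u ∈ C.neighborFinset a := by
    rw [SimpleGraph.mem_neighborFinset]; exact hau
  obtain ⟨a', hnfa', ha'u⟩ : ∃ a', C.neighborFinset a = {u, a'} ∧ a' ≠ u := by
    rw [hnfa] at humem ⊢
    rcases Finset.mem_insert.mp humem with h | h
    · exact ⟨q, by rw [h], fun hq => hpq (h.symm.trans hq.symm)⟩
    · rw [Finset.mem_singleton] at h
      exact ⟨p, by rw [h, Finset.pair_comm], fun hp => hpq (hp.trans h)⟩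
  set e₁ := s(u, a) with he₁
  set e₀ := s(u, v) with he₀
  set C2 := C \ fromEdgeSet {e₁} with hC2
  set C' := C2 ⊔ fromEdgeSet {e₀} with hC'
  obtain ⟨cy, hcy, hcm, -, -⟩ := cycle_two_nbrs hua hub hab (hdel u)
  have hC2conn : C2.Connected := connected_sdiff_of_cycle hCconn hcy hcm
  have hC'conn : C'.Connected := hC2conn.mono le_sup_left
  have hC'H : C' ≤ H := by
    refine sup_le (le_trans sdiff_le hCH) ?_
    intro x y hxy
    rw [fromEdgeSet_adj] at hxy
    obtain ⟨hx, -⟩ := hxy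
    rw [Set.mem_singleton_iff, he₀, Sym2.eq_iff] at hx
    rcases hx with ⟨rfl, rfl⟩ | ⟨rfl, rfl⟩
    · exact huv
    · exact huv.symm
  have hC'E : C'.edgeSet = (C.edgeSet \ {e₁}) ∪ {e₀} := by
    rw [hC', edgeSet_sup, hC2, edgeSet_sdiff_single, edgeSet_fromEdgeSet]
    congr 1
    ext f
    simp only [Set.mem_diff, Set.mem_singleton_iff, Set.mem_setOf_eq, and_iff_left_iff_imp]
    rintro rfl
    rw [he₀]
    simp [huv.ne]
  have he₁C : e₁ ∈ C.edgeSet := hua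
  have he₀C : e₀ ∉ C.edgeSet := hCuv
  have hE' : C'.edgeSet.ncard = Fintype.card V := by
    rw [hC'E]
    have hd : Disjoint (C.edgeSet \ {e₁}) {e₀} := by
      rw [Set.disjoint_singleton_right]
      intro h
      exact he₀C h.1
    rw [Set.ncard_union_eq hd (Set.toFinite _) (Set.toFinite _),
      Set.ncard_diff_singleton_of_mem he₁C, Set.ncard_singleton, hE]
    omega
  have hC'c : C'.IsCactus := by
    refine ⟨hC'conn, ?_⟩
    intro x y c₁ c₂ hc₁ hc₂ e he₁' he₂'
    by_contra hne
    have hex : ∃ f, (f ∈ c₁.edges ∧ f ∉ c₂.edges) ∨ (f ∈ c₂.edges ∧ f ∉ c₁.edges) := by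
      by_contra hcon
      push_neg at hcon
      apply hne
      ext f
      simp only [Set.mem_setOf_eq]
      exact ⟨(hcon f).1, (hcon f).2⟩
    obtain ⟨f, hf | hf⟩ := hex
    · exact (unicyclic_cactus_prop hC'conn (le_of_eq hE') c₁ c₂ hc₁ hc₂ hf.1 hf.2).elim
    · exact (unicyclic_cactus_prop hC'conn (le_of_eq hE') c₂ c₁ hc₂ hc₁ hf.1 hf.2).elim
  -- a has a' as unique neighbor in C'
  have hnbC' : C'.neighborSet a ⊆ {a'} := by
    intro x hx
    have hx' : C'.Adj a x := hx
    rw [hC', sup_adj, hC2, sdiff_adj, fromEdgeSet_adj] at hx'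
    rcases hx' with ⟨hCa, hnot⟩ | ⟨hmem, hxne⟩
    · have : x ∈ C.neighborFinset a := by
        rw [SimpleGraph.mem_neighborFinset]; exact hCa
      rw [hnfa'] at this
      rcases Finset.mem_insert.mp this with h | h
      · subst h
        exact absurd ⟨by simp only [Set.mem_singleton_iff, he₁]; exact Sym2.eq_swap, hau.ne⟩ hnot
      · rw [Finset.mem_singleton] at h
        simp [h]
    · have hh : s(a, x) = e₀ := hmem
      rw [he₀, Sym2.eq_iff] at hh
      rcases hh with ⟨h1, h2⟩ | ⟨h1, h2⟩
      · exact absurd h1 hua.ne'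
      · exact absurd h1 hav
  have haa' : a ≠ a' := by
    have : a' ∈ C.neighborFinset a := by rw [hnfa']; simp
    exact ((SimpleGraph.mem_neighborFinset _ _ _).mp this).ne
  obtain ⟨y, hy⟩ : ∃ y : V, y ∉ ({a, a'} : Finset V) := by
    by_contra hcy2
    push_neg at hcy2
    have h2 : (Finset.univ : Finset V).card ≤ ({a, a'} : Finset V).card :=
      Finset.card_le_card fun z _ => hcy2 z
    have h3 : ({a, a'} : Finset V).card ≤ 2 := Finset.card_insert_le _ _ |>.trans (by simp)
    rw [Finset.card_univ] at h2
    omega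
  simp only [Finset.mem_insert, Finset.mem_singleton, not_or] at hy
  have hcv : C'.IsCutVertex a' := pendant_cut hC'conn hnbC' haa' hy.1 hy.2
  exact ⟨C', hC'H, hC'c,
    fun C'' h1 h2 => le_trans (hmax C'' ⟨h1, h2⟩) (le_of_eq (hE.trans hE'.symm)),
    ⟨a', hcv⟩⟩
end

section
/- Let H = (V,E) be a connected graph, x ∈ V a vertex with degree at least 2, and let A ⊆ V \ {x} be nonempty with B := V \ (A ∪ {x}) also nonempty. Suppose both induced subgraphs H[A ∪ {x}] and H[B ∪ {x}] are connected. Then there exists a spanning connected subgraph T of H such that x is a cut vertex of T and both T[A ∪ {x}] and T[B ∪ {x}] are cacti. -/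
open SimpleGraph

lemma chain_sSup_acyclic {V : Type*} (c : Set (SimpleGraph V))
    (hc : IsChain (· ≤ ·) c) (hac : ∀ G ∈ c, G.IsAcyclic) : (sSup c).IsAcyclic := by
  intro v p hp
  have key : ∀ l : List (Sym2 V), l ≠ [] → (∀ e ∈ l, ∃ G ∈ c, e ∈ G.edgeSet) →
      ∃ G ∈ c, ∀ e ∈ l, e ∈ G.edgeSet := by
    intro l
    induction l with
    | nil => simp
    | cons e l ih =>
      intro _ hall
      obtain ⟨G, hG, hGe⟩ := hall e List.mem_cons_self
      rcases eq_or_ne l [] with rfl | hl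
      · exact ⟨G, hG, by simpa using hGe⟩
      · obtain ⟨G', hG', hall'⟩ := ih hl (fun e' he' => hall e' (List.mem_cons_of_mem _ he'))
        rcases hc.total hG hG' with hle | hle
        · refine ⟨G', hG', ?_⟩
          intro e' he'
          rcases List.mem_cons.mp he' with rfl | he'
          · exact (edgeSet_subset_edgeSet.mpr hle) hGe
          · exact hall' e' he'
        · refine ⟨G, hG, ?_⟩
          intro e' he'
          rcases List.mem_cons.mp he' with rfl | he'
          · exact hGe
          · exact (edgeSet_subset_edgeSet.mpr hle) (hall' e' he')
  have hne : p.edges ≠ [] := by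
    have h3 := hp.three_le_length
    intro h
    have := p.length_edges
    rw [h] at this
    simp at this
    omega
  obtain ⟨G, hG, hall⟩ := key p.edges hne (by
    intro e he
    have := p.edges_subset_edgeSet he
    induction e using Sym2.ind with
    | _ a b =>
      rw [mem_edgeSet, sSup_adj] at this
      obtain ⟨G, hG, hadj⟩ := this
      exact ⟨G, hG, hadj⟩)
  exact hac G hG (p.transfer G hall) (hp.transfer _)

lemma exists_spanning_tree {V : Type*} (G : SimpleGraph V) (h : G.Connected) :
    ∃ T, T ≤ G ∧ T.Connected ∧ T.IsAcyclic := by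
  obtain ⟨T, hT⟩ := zorn_le₀ {T : SimpleGraph V | T ≤ G ∧ T.IsAcyclic} (by
    intro c hcs hchain
    exact ⟨sSup c, ⟨sSup_le (fun t ht => (hcs ht).1),
      chain_sSup_acyclic c hchain (fun t ht => (hcs ht).2)⟩, fun z hz => le_sSup hz⟩)
  obtain ⟨⟨hTG, hTac⟩, hmax⟩ := hT
  have key : ∀ a b, G.Adj a b → T.Reachable a b := by
    intro a b hab
    by_contra hnr
    have hne : a ≠ b := hab.ne
    have hTab : ¬ T.Adj a b := fun h' => hnr h'.reachable
    have hac' : (T ⊔ edge a b).IsAcyclic := by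
      intro v p hp
      by_cases he : s(a, b) ∈ p.edges
      · have hr := (adj_and_reachable_delete_edges_iff_exists_cycle.mpr ⟨v, p, hp, he⟩).2
        apply hnr
        refine hr.mono ?_
        intro u w hw
        rw [deleteEdges_adj] at hw
        obtain ⟨hw1, hw2⟩ := hw
        have hw2 : ¬ (s(u, w) ∈ ({s(a, b)} : Set (Sym2 V)) ∧ u ≠ w) := fun h => hw2 h.1
        rcases hw1 with hw1 | hw1
        · exact hw1
        · rw [edge_adj] at hw1
          exfalso
          apply hw2
          refine ⟨?_, hw1.2⟩
          simp only [Set.mem_singleton_iff]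
          rcases hw1.1 with ⟨rfl, rfl⟩ | ⟨rfl, rfl⟩
          · rfl
          · exact Sym2.eq_swap
      · refine hTac (p.transfer T ?_) (hp.transfer _)
        intro e hee
        have hes := p.edges_subset_edgeSet hee
        rw [edgeSet_sup] at hes
        rcases hes with hes | hes
        · exact hes
        · rw [edge_edgeSet_of_ne hne] at hes
          exact absurd (hes ▸ hee) he
    have hle : T ⊔ edge a b ≤ G := by
      refine sup_le hTG ?_
      intro u w hw
      rw [edge_adj] at hw
      rcases hw.1 with ⟨rfl, rfl⟩ | ⟨rfl, rfl⟩
      · exact hab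
      · exact hab.symm
    have hTle : T ⊔ edge a b ≤ T := hmax ⟨hle, hac'⟩ le_sup_left
    exact hTab (hTle (le_sup_right (a := T) ((edge_adj a b a b).mpr ⟨Or.inl ⟨rfl, rfl⟩, hne⟩)))
  have hpre : ∀ u v, G.Reachable u v → T.Reachable u v := by
    intro u v huv
    obtain ⟨p⟩ := huv
    induction p with
    | nil => exact Reachable.refl _
    | cons hadj p ih => exact (key _ _ hadj).trans ih
  exact ⟨T, hTG, (connected_iff T).mpr ⟨fun u v => hpre u v (h.preconnected u v), h.nonempty⟩, hTac⟩

theorem glue_spanning_trees_at_cut_vertex {V : Type*} (H : SimpleGraph V)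
    (hH : H.Connected) (x : V) (hdeg : 2 ≤ (H.neighborSet x).ncard)
    (A : Set V) (hxA : x ∉ A) (hAne : A.Nonempty)
    (B : Set V) (hB : B = Set.univ \ (A ∪ {x})) (hBne : B.Nonempty)
    (hAc : (H.induce (A ∪ {x})).Connected)
    (hBc : (H.induce (B ∪ {x})).Connected) :
    ∃ T : SimpleGraph V, T ≤ H ∧ T.Connected ∧ T.IsCutVertex x ∧
      (T.induce (A ∪ {x})).IsCactus ∧ (T.induce (B ∪ {x})).IsCactus := by
  -- basic set facts
  have hBmem : ∀ v ∈ B, v ∉ A ∧ v ≠ x := by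
    intro v hv
    rw [hB] at hv
    obtain ⟨-, hv⟩ := hv
    constructor
    · exact fun h => hv (Or.inl h)
    · exact fun h => hv (Or.inr h)
  have hunion : ∀ v : V, v ∈ A ∪ {x} ∨ v ∈ B ∪ {x} := by
    intro v
    by_cases h : v ∈ A ∪ {x}
    · exact Or.inl h
    · exact Or.inr (Or.inl (by rw [hB]; exact ⟨trivial, h⟩))
  have hinter : ∀ v : V, v ∈ A ∪ {x} → v ∈ B ∪ {x} → v = x := by
    intro v h1 h2
    rcases h2 with h2 | h2
    · rcases h1 with h1 | h1
      · exact absurd h1 (hBmem v h2).1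
      · exact h1
    · exact h2
  -- spanning trees
  obtain ⟨TA, hTAle, hTAc, hTAac⟩ := exists_spanning_tree _ hAc
  obtain ⟨TB, hTBle, hTBc, hTBac⟩ := exists_spanning_tree _ hBc
  set fA : ↥(A ∪ {x}) ↪ V := Function.Embedding.subtype _ with hfA
  set fB : ↥(B ∪ {x}) ↪ V := Function.Embedding.subtype _ with hfB
  set T : SimpleGraph V := TA.map fA ⊔ TB.map fB with hTdef
  have hadjA : ∀ (u v : ↥(A ∪ {x})), T.Adj ↑u ↑v ↔ TA.Adj u v := by
    intro u v
    rw [hTdef, sup_adj, map_adj, map_adj]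
    constructor
    · rintro (⟨a, b, hab, ha, hb⟩ | ⟨a, b, hab, ha, hb⟩)
      · rwa [show a = u from Subtype.ext ha, show b = v from Subtype.ext hb] at hab
      · exfalso
        have hu : (u : V) ∈ B ∪ {x} := ha ▸ a.2
        have hv : (v : V) ∈ B ∪ {x} := hb ▸ b.2
        have hux := hinter _ u.2 hu
        have hvx := hinter _ v.2 hv
        exact hab.ne (fB.injective (by rw [ha, hb, hux, hvx]))
    · intro h
      exact Or.inl ⟨u, v, h, rfl, rfl⟩
  have hadjB : ∀ (u v : ↥(B ∪ {x})), T.Adj ↑u ↑v ↔ TB.Adj u v := by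
    intro u v
    rw [hTdef, sup_adj, map_adj, map_adj]
    constructor
    · rintro (⟨a, b, hab, ha, hb⟩ | ⟨a, b, hab, ha, hb⟩)
      · exfalso
        have hu : (u : V) ∈ A ∪ {x} := ha ▸ a.2
        have hv : (v : V) ∈ A ∪ {x} := hb ▸ b.2
        have hux := hinter _ hu u.2
        have hvx := hinter _ hv v.2
        exact hab.ne (fA.injective (by rw [ha, hb, hux, hvx]))
      · rwa [show a = u from Subtype.ext ha, show b = v from Subtype.ext hb] at hab
    · intro h
      exact Or.inr ⟨u, v, h, rfl, rfl⟩
  have hindA : T.induce (A ∪ {x}) = TA := by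
    ext u v
    exact hadjA u v
  have hindB : T.induce (B ∪ {x}) = TB := by
    ext u v
    exact hadjB u v
  have hTH : T ≤ H := by
    rw [hTdef]
    refine sup_le ?_ ?_
    · rintro u v ⟨-, a, b, hab, rfl, rfl⟩
      exact hTAle hab
    · rintro u v ⟨-, a, b, hab, rfl, rfl⟩
      exact hTBle hab
  have hxreach : ∀ v : V, T.Reachable v x := by
    intro v
    rcases hunion v with hv | hv
    · have h := hTAc.preconnected ⟨v, hv⟩ ⟨x, Or.inr rfl⟩
      have h2 := h.map (⟨fun a => (a : V), fun {a b} hab => (hadjA a b).mpr hab⟩ : TA →g T)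
      exact h2
    · have h := hTBc.preconnected ⟨v, hv⟩ ⟨x, Or.inr rfl⟩
      have h2 := h.map (⟨fun a => (a : V), fun {a b} hab => (hadjB a b).mpr hab⟩ : TB →g T)
      exact h2
  have hTconn : T.Connected := (connected_iff T).mpr
    ⟨fun u v => (hxreach u).trans (hxreach v).symm, ⟨x⟩⟩
  refine ⟨T, hTH, hTconn, ⟨hTconn, ?_⟩, ?_, ?_⟩
  · -- not connected after deleting x
    intro hconn
    obtain ⟨a, ha⟩ := hAne
    obtain ⟨b, hb⟩ := hBne
    have hax : a ≠ x := fun h => hxA (h ▸ ha)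
    have hbx : b ≠ x := (hBmem b hb).2
    have hav : a ∈ ((⊤ : T.Subgraph).deleteVerts {x}).verts := ⟨trivial, by simpa using hax⟩
    have hbv : b ∈ ((⊤ : T.Subgraph).deleteVerts {x}).verts := ⟨trivial, by simpa using hbx⟩
    obtain ⟨p⟩ := hconn.preconnected ⟨a, hav⟩ ⟨b, hbv⟩
    have hinv : ∀ (u w : ↥((⊤ : T.Subgraph).deleteVerts {x}).verts)
        (p : (((⊤ : T.Subgraph).deleteVerts {x}).coe).Walk u w), (u : V) ∈ A → (w : V) ∈ A := by
      intro u w p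
      induction p with
      | nil => exact id
      | @cons u' v' w' hadj p ih =>
        intro hu
        apply ih
        have hadj0 := hadj
        rw [Subgraph.coe_adj] at hadj0
        have hadj' : T.Adj ↑u' ↑v' := hadj0.adj_sub
        have hvx : (v' : V) ≠ x := by
          have := v'.2.2
          simpa using this
        rw [hTdef, sup_adj, map_adj, map_adj] at hadj'
        rcases hadj' with ⟨c, d, hcd, hc, hd⟩ | ⟨c, d, hcd, hc, hd⟩
        · have hv : (v' : V) ∈ A ∪ {x} := hd ▸ d.2
          rcases hv with hv | hv
          · exact hv
          · exact absurd hv hvx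
        · exfalso
          have hu' : (u' : V) ∈ B ∪ {x} := hc ▸ c.2
          rcases hu' with hu' | hu'
          · exact (hBmem _ hu').1 hu
          · exact hxA (hu' ▸ hu)
    exact (hBmem b hb).1 (hinv _ _ p ha)
  · rw [hindA]
    exact ⟨hTAc, fun u v c₁ c₂ hc₁ _ _ _ _ => (hTAac c₁ hc₁).elim⟩
  · rw [hindB]
    exact ⟨hTBc, fun u v c₁ c₂ hc₁ _ _ _ _ => (hTBac c₁ hc₁).elim⟩
end

section
/- Let G be an edge-minimal non-cactus connected graph with two distinct cycles C1 and C2 sharing a path P = u1 u2 … ul (l ≥ 2) of common edges that is maximal with this property. Then the graph obtained from G by deleting all edges of P contains two distinct paths between u1 and ul, and hence contains a cycle distinct from both C1 and C2. -/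
open SimpleGraph

namespace CactusAux

variable {V : Type*} {G : SimpleGraph V}

open SimpleGraph.Walk

/-- A concat is a path iff the underlying walk is a path and the new endpoint is fresh. -/
lemma concat_isPath_iff {a b c : V} (W : G.Walk a b) (h : G.Adj b c) :
    (W.concat h).IsPath ↔ W.IsPath ∧ c ∉ W.support := by
  rw [← isPath_reverse_iff, Walk.reverse_concat, Walk.cons_isPath_iff, isPath_reverse_iff,
    Walk.support_reverse, List.mem_reverse]

/-- Rotating the closing edge of a cycle from the back to the front preserves being a cycle. -/
lemma isCycle_cons_of_concat {a b : V} {W : G.Walk a b} {h' : G.Adj b a}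
    (hcy : (W.concat h').IsCycle) : (Walk.cons h' W).IsCycle := by
  rw [Walk.cons_isCycle_iff]
  have hnodE : (W.edges ++ [s(b, a)]).Nodup := by
    have := hcy.isCircuit.isTrail.edges_nodup
    rwa [Walk.edges_concat, List.concat_eq_append] at this
  rw [List.nodup_append] at hnodE
  have hbA : s(b, a) ∉ W.edges := fun hm => hnodE.2.2 _ hm _ (List.mem_singleton_self _) rfl
  refine ⟨?_, hbA⟩
  -- W is a path
  have hsup : (W.support ++ [a]).tail.Nodup := by
    have := hcy.support_nodup
    rwa [Walk.support_concat] at this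
  have hWs : W.support = a :: W.support.tail := W.support_eq_cons
  rw [hWs] at hsup
  simp only [List.cons_append, List.tail_cons] at hsup
  rw [List.nodup_append] at hsup
  apply Walk.IsPath.mk'
  rw [hWs, List.nodup_cons]
  exact ⟨fun hm => hsup.2.2 _ hm _ (List.mem_singleton_self _) rfl, hsup.1⟩

/-- In a path starting at `b`, any edge containing `b` is the first edge. -/
lemma eq_cons_of_mem_edges {b a z : V} (w : G.Walk b a) (hw : w.IsPath)
    (he : s(b, z) ∈ w.edges) :
    ∃ (h' : G.Adj b z) (w' : G.Walk z a), w = Walk.cons h' w' := by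
  cases w with
  | nil => simp at he
  | @cons _ m _ h₀ w₀ =>
    rw [Walk.edges_cons, List.mem_cons] at he
    rcases he with he | he
    · have hzm : z = m := Sym2.congr_right.mp he
      subst hzm
      exact ⟨h₀, w₀, rfl⟩
    · exfalso
      have hb : b ∈ w₀.support := Walk.fst_mem_support_of_mem_edges w₀ he
      exact ((Walk.cons_isPath_iff h₀ w₀).mp hw).2 hb

/-- In a path ending at `b`, any edge containing `b` is the last edge. -/
lemma eq_concat_of_mem_edges {a b z : V} (w : G.Walk a b) (hw : w.IsPath)
    (he : s(z, b) ∈ w.edges) :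
    ∃ (w' : G.Walk a z) (h' : G.Adj z b), w = w'.concat h' := by
  have he' : s(b, z) ∈ w.reverse.edges := by
    rw [Walk.edges_reverse, List.mem_reverse, Sym2.eq_swap]; exact he
  obtain ⟨h', w', hw'⟩ := eq_cons_of_mem_edges w.reverse hw.reverse he'
  refine ⟨w'.reverse, h'.symm, ?_⟩
  have hrev := congrArg Walk.reverse hw'
  rw [Walk.reverse_reverse] at hrev
  rw [hrev, Walk.reverse_cons, ← Walk.concat_eq_append]

/-- A nonempty path whose edges all lie on a cycle can be completed to a cycle with the
same edge set. -/
lemma path_complete_to_cycle {u : V} (c : G.Walk u u) (hc : c.IsCycle)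
    {x y : V} (p : G.Walk x y) :
    p.IsPath → (∀ e ∈ p.edges, e ∈ c.edges) → p.edges ≠ [] →
    ∃ q : G.Walk y x, q.IsPath ∧ (p.append q).IsCycle ∧
      ∀ e, e ∈ (p.append q).edges ↔ e ∈ c.edges := by
  induction p with
  | nil => intro _ _ hne; simp at hne
  | @cons x x₁ y h p'' ih =>
    intro hp hsub hne
    cases p'' with
    | nil =>
      -- base case: p is a single edge s(x, y) (here x₁ = y)
      clear ih hne
      have he₀ : s(x, x₁) ∈ c.edges := hsub _ (by simp)
      have hxs : x ∈ c.support := Walk.fst_mem_support_of_mem_edges c he₀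
      classical
      have key : ∀ (c' : G.Walk x x), c'.IsCycle → s(x, x₁) ∈ c'.edges →
          ∃ q : G.Walk x₁ x, q.IsPath ∧
            ((Walk.cons h Walk.nil).append q).IsCycle ∧
            ∀ e, e ∈ ((Walk.cons h Walk.nil).append q).edges ↔ e ∈ c'.edges := by
        intro c' hc' he'
        cases c' with
        | nil => exact absurd rfl hc'.ne_nil
        | @cons _ w _ h₀ r =>
          have hcc := (Walk.cons_isCycle_iff r h₀).mp hc'
          rw [Walk.edges_cons, List.mem_cons] at he'
          rcases he' with he' | he'
          · -- s(x, x₁) is the first edge of the cycle, so x₁ = w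
            have hx₁w : x₁ = w := Sym2.congr_right.mp he'
            subst hx₁w
            refine ⟨r, hcc.1, ?_, ?_⟩
            · simp only [Walk.cons_append, Walk.nil_append]
              exact hc'
            · intro e
              simp only [Walk.cons_append, Walk.nil_append]
          · -- s(x, x₁) is the last edge of the cycle
            have hx₁w : x₁ ≠ w := by
              rintro rfl
              exact hcc.2 he'
            have he'' : s(x₁, x) ∈ r.edges := by rw [Sym2.eq_swap]; exact he'
            obtain ⟨r₁, h₂, hreq⟩ := eq_concat_of_mem_edges r hcc.1 he''
            subst hreq
            have hr₁ := (concat_isPath_iff r₁ h₂).mp hcc.1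
            refine ⟨r₁.reverse.concat h₀.symm, ?_, ?_, ?_⟩
            · rw [concat_isPath_iff, isPath_reverse_iff, Walk.support_reverse,
                List.mem_reverse]
              exact hr₁
            · simp only [Walk.cons_append, Walk.nil_append]
              rw [Walk.cons_isCycle_iff]
              constructor
              · rw [concat_isPath_iff, isPath_reverse_iff, Walk.support_reverse,
                  List.mem_reverse]
                exact hr₁
              · rw [Walk.edges_concat, List.concat_eq_append, List.mem_append]
                rintro (hm | hm)
                · rw [Walk.edges_reverse, List.mem_reverse] at hm
                  exact hr₁.2 (Walk.fst_mem_support_of_mem_edges r₁ hm)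
                · rw [List.mem_singleton] at hm
                  rcases Sym2.eq_iff.mp hm with ⟨rfl, rfl⟩ | ⟨hxw, rfl⟩
                  · exact h.ne rfl
                  · exact hx₁w rfl
            · intro e
              simp only [Walk.cons_append, Walk.nil_append, Walk.edges_cons,
                Walk.edges_concat, List.concat_eq_append, Walk.edges_reverse, List.mem_cons, List.mem_append,
                List.mem_reverse, List.mem_singleton]
              have e1 : s(x₁, x) = s(x, x₁) := Sym2.eq_swap
              have e2 : s(w, x) = s(x, w) := Sym2.eq_swap
              rw [e1, e2]
              tauto
      obtain ⟨q, hq1, hq2, hq3⟩ := key (c.rotate x hxs) (hc.rotate hxs)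
        (((Walk.rotate_edges c x hxs).mem_iff).mpr he₀)
      exact ⟨q, hq1, hq2, fun e => (hq3 e).trans ((Walk.rotate_edges c x hxs).mem_iff)⟩
    | @cons _ x₂ _ h₂ p₃ =>
      -- inductive step
      have hp' := hp.of_cons
      have hxsup : x ∉ (Walk.cons h₂ p₃).support := ((Walk.cons_isPath_iff _ _).mp hp).2
      obtain ⟨q', hq'p, hq'c, hq'iff⟩ := ih hp'
        (fun e he => hsub e (by rw [Walk.edges_cons]; exact List.mem_cons_of_mem _ he))
        (by simp)
      have he₀ : s(x, x₁) ∈ c.edges := hsub _ (by simp)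
      have he₀' : s(x, x₁) ∈ ((Walk.cons h₂ p₃).append q').edges := (hq'iff _).mpr he₀
      rw [Walk.edges_append, List.mem_append] at he₀'
      rcases he₀' with he₀' | he₀'
      · exact absurd (Walk.fst_mem_support_of_mem_edges _ he₀') hxsup
      · obtain ⟨q, h', hqeq⟩ := eq_concat_of_mem_edges q' hq'p he₀'
        subst hqeq
        refine ⟨q, (concat_isPath_iff q h').mp hq'p |>.1, ?_, ?_⟩
        · rw [Walk.cons_append]
          apply isCycle_cons_of_concat (h' := h')
          rwa [Walk.append_concat] at hq'c
        · intro e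
          rw [← hq'iff e]
          simp only [Walk.cons_append, Walk.edges_cons, Walk.edges_append,
            Walk.edges_concat, List.concat_eq_append, List.mem_cons, List.mem_append,
            List.mem_singleton]
          tauto

end CactusAux

theorem delete_maximal_common_path_gives_third_cycle {V : Type*} (G : SimpleGraph V)
    (hconn : G.Connected) (hnc : ¬G.IsCactus)
    (hmin : ∀ e ∈ G.edgeSet, (G.deleteEdges {e}).IsCactus)
    {u v : V} (c₁ : G.Walk u u) (c₂ : G.Walk v v)
    (h₁ : c₁.IsCycle) (h₂ : c₂.IsCycle)
    (hne : {f | f ∈ c₁.edges} ≠ {f | f ∈ c₂.edges})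
    {u₁ uₗ : V} (p : G.Walk u₁ uₗ) (hp : p.IsPath) (hpe : p.edges ≠ [])
    (hcommon : ∀ e ∈ p.edges, e ∈ c₁.edges ∧ e ∈ c₂.edges)
    (hmax : ∀ e, e ∈ c₁.edges → e ∈ c₂.edges → e ∉ p.edges →
      ∀ x ∈ p.support, x ∉ e) :
    (∃ q₁ q₂ : (G.deleteEdges {e | e ∈ p.edges}).Walk u₁ uₗ,
      q₁.IsPath ∧ q₂.IsPath ∧ q₁ ≠ q₂) ∧
    ∃ (w : V) (c : (G.deleteEdges {e | e ∈ p.edges}).Walk w w), c.IsCycle ∧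
      {f | f ∈ c.edges} ≠ {f | f ∈ c₁.edges} ∧
      {f | f ∈ c.edges} ≠ {f | f ∈ c₂.edges} := by
  classical
  obtain ⟨qA, hqApath, hqAcyc, hqAiff⟩ :=
    CactusAux.path_complete_to_cycle c₁ h₁ p hp (fun e he => (hcommon e he).1) hpe
  obtain ⟨qB, hqBpath, hqBcyc, hqBiff⟩ :=
    CactusAux.path_complete_to_cycle c₂ h₂ p hp (fun e he => (hcommon e he).2) hpe
  set s : Set (Sym2 V) := {e | e ∈ p.edges} with hs
  -- edges of qA and qB avoid p.edges
  have hdisjA : ∀ e ∈ qA.edges, e ∉ s := by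
    have hnod := hqAcyc.isCircuit.isTrail.edges_nodup
    rw [Walk.edges_append, List.nodup_append] at hnod
    intro e he hes
    exact hnod.2.2 _ hes _ he rfl
  have hdisjB : ∀ e ∈ qB.edges, e ∉ s := by
    have hnod := hqBcyc.isCircuit.isTrail.edges_nodup
    rw [Walk.edges_append, List.nodup_append] at hnod
    intro e he hes
    exact hnod.2.2 _ hes _ he rfl
  have hdisjA' : ∀ e ∈ qA.reverse.edges, e ∉ s := by
    intro e he; rw [Walk.edges_reverse, List.mem_reverse] at he; exact hdisjA e he
  have hdisjB' : ∀ e ∈ qB.reverse.edges, e ∉ s := by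
    intro e he; rw [Walk.edges_reverse, List.mem_reverse] at he; exact hdisjB e he
  let q₁ : (G.deleteEdges s).Walk u₁ uₗ := qA.reverse.toDeleteEdges s hdisjA'
  let q₂ : (G.deleteEdges s).Walk u₁ uₗ := qB.reverse.toDeleteEdges s hdisjB'
  have hq₁path : q₁.IsPath := by
    simp only [q₁]
    exact Walk.IsPath.toDeleteEdges G s hqApath.reverse hdisjA'
  have hq₂path : q₂.IsPath := by
    simp only [q₂]
    exact Walk.IsPath.toDeleteEdges G s hqBpath.reverse hdisjB'
  have hq₁₂ : q₁ ≠ q₂ := by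
    intro hq
    have hEdges : qA.edges = qB.edges := by
      have h1 := congrArg Walk.edges hq
      simp only [q₁, q₂, Walk.toDeleteEdges, Walk.edges_transfer, Walk.edges_reverse] at h1
      exact List.reverse_injective h1
    apply hne
    ext f
    simp only [Set.mem_setOf_eq]
    rw [← hqAiff f, ← hqBiff f, Walk.edges_append, Walk.edges_append, hEdges]
  refine ⟨⟨q₁, q₂, hq₁path, hq₂path, hq₁₂⟩, ?_⟩
  -- the deleted graph is not acyclic
  have hnacyc : ¬(G.deleteEdges s).IsAcyclic := by
    intro hA
    have := isAcyclic_iff_path_unique.mp hA ⟨q₁, hq₁path⟩ ⟨q₂, hq₂path⟩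
    exact hq₁₂ (congrArg Subtype.val this)
  have hcycex : ∃ (w : V) (c : (G.deleteEdges s).Walk w w), c.IsCycle := by
    by_contra hcon
    push_neg at hcon
    exact hnacyc fun w c hc => hcon w c hc
  obtain ⟨w, c, hc⟩ := hcycex
  obtain ⟨e₀, he₀⟩ : ∃ e, e ∈ p.edges := List.exists_mem_of_ne_nil p.edges hpe
  have he₀c : e₀ ∉ c.edges := by
    intro hmem
    have hsub := c.edges_subset_edgeSet hmem
    rw [SimpleGraph.edgeSet_deleteEdges] at hsub
    exact hsub.2 he₀
  refine ⟨w, c, hc, ?_, ?_⟩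
  · intro hset
    have : e₀ ∈ {f | f ∈ c₁.edges} := (hcommon e₀ he₀).1
    rw [← hset] at this
    exact he₀c this
  · intro hset
    have : e₀ ∈ {f | f ∈ c₂.edges} := (hcommon e₀ he₀).2
    rw [← hset] at this
    exact he₀c this
end
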